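/- arXiv:2506.01235 — 4 statements merged into one kernel-verified Lean document; each statement's English description precedes it below -/
import Mathlib

section
/- Let d ≥ 2. For every integer r, an element g ∈ Γ_d satisfies g⁻¹ a_{d-1} g = a_{d-1} a_d^r if and only if g = t^r x for some x ∈ A_d. Consequently, every g ∈ Γ_d with g⁻¹ a_{d-1} g = a_{d-1} a_d^r satisfies d(1,g) ≥ |r|, and t^r is the unique element of word length |r| conjugating a_{d-1} to a_{d-1} a_d^r. -/
namespace ModelFiliform

/-- The "down-shift" endomorphism `N` of `ℤ^d`: `(N x) j = x (j-1)` for `j ≥ 1`, `(N x) 0 = 0`.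
The automorphism `φ` of the model filiform group is `1 + N`. -/
def shiftMap (d : ℕ) : (Fin d → ℤ) →ₗ[ℤ] (Fin d → ℤ) where
  toFun x := fun j =>
    if _h : 1 ≤ (j : ℕ) then x ⟨(j : ℕ) - 1, lt_of_le_of_lt (Nat.sub_le _ _) j.isLt⟩ else 0
  map_add' x y := by funext j; by_cases h : 1 ≤ (j : ℕ) <;> simp [h]
  map_smul' c x := by funext j; by_cases h : 1 ≤ (j : ℕ) <;> simp [h]

theorem shiftMap_apply (d : ℕ) (x : Fin d → ℤ) (j : Fin d) :
    shiftMap d x j =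
      if _h : 1 ≤ (j : ℕ) then x ⟨(j : ℕ) - 1, lt_of_le_of_lt (Nat.sub_le _ _) j.isLt⟩ else 0 :=
  rfl

theorem shiftMap_pow_apply (d k : ℕ) (x : Fin d → ℤ) (j : Fin d) :
    ((shiftMap d ^ k) x) j =
      if _h : k ≤ (j : ℕ) then x ⟨(j : ℕ) - k, lt_of_le_of_lt (Nat.sub_le _ _) j.isLt⟩
      else 0 := by
  induction k generalizing x with
  | zero => simp
  | succ k ih =>
      rw [pow_succ, Module.End.mul_apply, ih]
      by_cases h1 : k ≤ (j : ℕ)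
      · rw [dif_pos h1, shiftMap_apply]
        by_cases h2 : k + 1 ≤ (j : ℕ)
        · rw [dif_pos (show 1 ≤ (j : ℕ) - k by omega), dif_pos h2]
          have hab : (j : ℕ) - k - 1 = (j : ℕ) - (k + 1) := by omega
          simp only [hab]
        · rw [dif_neg (show ¬ 1 ≤ (j : ℕ) - k by omega), dif_neg h2]
      · rw [dif_neg h1, dif_neg (by omega)]

theorem shiftMap_nilpotent (d : ℕ) : IsNilpotent (shiftMap d) := by
  refine ⟨d, ?_⟩
  apply LinearMap.ext
  intro x
  funext j
  rw [shiftMap_pow_apply, dif_neg (by omega)]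
  rfl

/-- `φ = 1 + N` as a unit of the endomorphism ring of `ℤ^d`. -/
noncomputable def phiUnit (d : ℕ) : (Module.End ℤ (Fin d → ℤ))ˣ :=
  ((shiftMap_nilpotent d).isUnit_one_add).unit

/-- The automorphism `φ` of `ℤ^d`: writing `ℤ^d` multiplicatively with basis `a_1, …, a_d`
(where `a_{i+1}` is the `i`-th standard basis vector, `i : Fin d`), it fixes `a_d` and sends
`a_i ↦ a_i a_{i+1}` for `1 ≤ i < d`. -/
noncomputable def phi (d : ℕ) : (Fin d → ℤ) ≃ₗ[ℤ] (Fin d → ℤ) :=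
  LinearMap.GeneralLinearGroup.generalLinearEquiv ℤ _ (phiUnit d)

/-- `φ` as a multiplicative automorphism of `Multiplicative ℤ^d`. -/
noncomputable def phiAut (d : ℕ) : MulAut (Multiplicative (Fin d → ℤ)) :=
  AddEquiv.toMultiplicative (phi d).toAddEquiv

/-- The action of `ℤ` on `ℤ^d` defining `Γ_d = ℤ^d ⋊_φ ℤ`: the generator `t` acts by
`t x t⁻¹ = φ⁻¹(x)`, so that `t⁻¹ a_i t = φ(a_i)`, i.e. `t⁻¹ a_i t = a_i a_{i+1}` for
`1 ≤ i < d` and `t⁻¹ a_d t = a_d`. -/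
noncomputable def act (d : ℕ) : Multiplicative ℤ →* MulAut (Multiplicative (Fin d → ℤ)) :=
  zpowersHom _ (phiAut d)⁻¹

/-- The discrete model filiform group `Γ_d = ℤ^d ⋊_φ ℤ`. -/
abbrev Gamma (d : ℕ) : Type :=
  SemidirectProduct (Multiplicative (Fin d → ℤ)) (Multiplicative ℤ) (act d)

/-- The generator `t` of `Γ_d`. -/
noncomputable def tGen (d : ℕ) : Gamma d :=
  SemidirectProduct.inr (Multiplicative.ofAdd (1 : ℤ))

/-- The generators `a_1, …, a_d` of `Γ_d`: here `aGen d i` is `a_{i+1}` (as `i : Fin d` is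
0-indexed), so `a_1 = aGen d ⟨0, _⟩` and `a_d = aGen d ⟨d-1, _⟩`. -/
noncomputable def aGen (d : ℕ) (i : Fin d) : Gamma d :=
  SemidirectProduct.inl (Multiplicative.ofAdd (Pi.single i (1 : ℤ)))

/-- The standard generating set `{a_1, …, a_d, t}` of `Γ_d`. -/
noncomputable def gens (d : ℕ) : Set (Gamma d) := insert (tGen d) (Set.range (aGen d))

/-- The word length `d(1,g)` of `g ∈ Γ_d` with respect to the standard generators: the least
`n` such that `g` is a product of `n` elements of `{a_1^{±1}, …, a_d^{±1}, t^{±1}}`. -/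
noncomputable def wl (d : ℕ) (g : Gamma d) : ℕ :=
  sInf {n | ∃ l : List (Gamma d), l.length = n ∧
    (∀ x ∈ l, x ∈ gens d ∨ x⁻¹ ∈ gens d) ∧ l.prod = g}

/-- The subgroup `A_d = ℤ^d ⋊ 1 = ⟨a_1, …, a_d⟩` of `Γ_d`. -/
noncomputable def A (d : ℕ) : Subgroup (Gamma d) := Subgroup.closure (Set.range (aGen d))

theorem conj_inl (d : ℕ) (g : Gamma d) (v : Multiplicative (Fin d → ℤ)) :
    g⁻¹ * SemidirectProduct.inl v * g = SemidirectProduct.inl ((act d g.right⁻¹) v) := by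
  ext
  all_goals
    simp [SemidirectProduct.mul_left, SemidirectProduct.inv_left, SemidirectProduct.mul_right,
      SemidirectProduct.inv_right, map_mul, mul_comm, mul_assoc, mul_left_comm]

theorem act_inv_apply (d : ℕ) (n : ℤ) (v : Multiplicative (Fin d → ℤ)) :
    act d (Multiplicative.ofAdd n)⁻¹ v = (phiAut d ^ n) v := by
  simp [act, zpowersHom_apply]

theorem phiAut_ofAdd (d : ℕ) (v : Fin d → ℤ) :
    phiAut d (Multiplicative.ofAdd v) = Multiplicative.ofAdd (v + shiftMap d v) := by
  simp [phiAut, phi, phiUnit, LinearMap.GeneralLinearGroup.generalLinearEquiv,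
    IsUnit.unit_spec]

theorem shift_e (d : ℕ) (hd : 2 ≤ d) :
    shiftMap d (Pi.single (⟨d - 2, by have := hd; omega⟩ : Fin d) (1:ℤ)) =
      Pi.single (⟨d - 1, by have := hd; omega⟩ : Fin d) (1:ℤ) := by
  funext j
  rw [shiftMap_apply]
  by_cases h : 1 ≤ (j : ℕ)
  · rw [dif_pos h]
    simp only [Pi.single_apply]
    by_cases h2 : (j : ℕ) = d - 1
    · rw [if_pos (by ext; simp; omega), if_pos (by ext; simp; omega)]
    · rw [if_neg (by intro hc; apply h2; have := congrArg Fin.val hc; simp at this; omega),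
        if_neg (by intro hc; apply h2; have := congrArg Fin.val hc; simp at this; omega)]
  · rw [dif_neg h]
    rw [Pi.single_apply, if_neg (by intro hc; have := congrArg Fin.val hc; simp at this; omega)]

theorem shift_f (d : ℕ) (hd : 2 ≤ d) :
    shiftMap d (Pi.single (⟨d - 1, by have := hd; omega⟩ : Fin d) (1:ℤ)) = 0 := by
  funext j
  rw [shiftMap_apply]
  by_cases h : 1 ≤ (j : ℕ)
  · rw [dif_pos h]
    rw [Pi.single_apply, if_neg (by intro hc; have := congrArg Fin.val hc; simp at this; omega)]
    rfl
  · rw [dif_neg h]; rfl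

theorem phiAut_zpow_e (d : ℕ) (hd : 2 ≤ d) (n : ℤ) :
    (phiAut d ^ n) (Multiplicative.ofAdd (Pi.single (⟨d - 2, by have := hd; omega⟩ : Fin d) (1:ℤ))) =
      Multiplicative.ofAdd (Pi.single (⟨d - 2, by have := hd; omega⟩ : Fin d) (1:ℤ)
        + n • Pi.single (⟨d - 1, by have := hd; omega⟩ : Fin d) (1:ℤ)) := by
  set e : Fin d → ℤ := Pi.single (⟨d - 2, by have := hd; omega⟩ : Fin d) (1:ℤ)
  set f : Fin d → ℤ := Pi.single (⟨d - 1, by have := hd; omega⟩ : Fin d) (1:ℤ)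
  have key : ∀ k : ℤ, phiAut d (Multiplicative.ofAdd (e + k • f))
      = Multiplicative.ofAdd (e + (k + 1) • f) := by
    intro k
    rw [phiAut_ofAdd]
    congr 1
    rw [map_add, map_smul, shift_e d hd, shift_f d hd, smul_zero, add_zero, add_smul, one_smul]
    abel
  have keyinv : ∀ k : ℤ, (phiAut d)⁻¹ (Multiplicative.ofAdd (e + k • f))
      = Multiplicative.ofAdd (e + (k - 1) • f) := by
    intro k
    apply (phiAut d).injective
    show phiAut d ((phiAut d)⁻¹ _) = _
    rw [MulAut.apply_inv_self, key]
    norm_num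
  induction n using Int.induction_on with
  | zero => simp
  | succ k ih =>
      rw [add_comm (k:ℤ) 1, zpow_add, zpow_one, MulAut.mul_apply, ih, key]
      push_cast; ring_nf
  | pred k ih =>
      have h1 : (-(k:ℤ) - 1) = (-1) + (-(k:ℤ)) := by ring
      rw [h1, zpow_add, zpow_neg_one, MulAut.mul_apply, ih, keyinv]
      push_cast; ring_nf

theorem cond_iff (d : ℕ) (hd : 2 ≤ d) (r : ℤ) (g : Gamma d) :
    g⁻¹ * aGen d ⟨d - 2, by have := hd; omega⟩ * g =
        aGen d ⟨d - 2, by have := hd; omega⟩ * aGen d ⟨d - 1, by have := hd; omega⟩ ^ r ↔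
      g.right = Multiplicative.ofAdd r := by
  set e : Fin d → ℤ := Pi.single (⟨d - 2, by have := hd; omega⟩ : Fin d) (1:ℤ) with he
  set f : Fin d → ℤ := Pi.single (⟨d - 1, by have := hd; omega⟩ : Fin d) (1:ℤ) with hf
  have hg : g.right = Multiplicative.ofAdd (Multiplicative.toAdd g.right) := rfl
  have lhs : g⁻¹ * aGen d ⟨d - 2, by have := hd; omega⟩ * g =
      SemidirectProduct.inl (Multiplicative.ofAdd
        (e + (Multiplicative.toAdd g.right) • f)) := by
    rw [show aGen d ⟨d - 2, by have := hd; omega⟩ = SemidirectProduct.inl (Multiplicative.ofAdd e) from rfl,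
      conj_inl, hg, act_inv_apply, phiAut_zpow_e d hd]
    simp
    rfl
  have rhs : aGen d ⟨d - 2, by have := hd; omega⟩ * aGen d ⟨d - 1, by have := hd; omega⟩ ^ r =
      SemidirectProduct.inl (Multiplicative.ofAdd (e + r • f)) := by
    rw [show aGen d ⟨d - 2, by have := hd; omega⟩ = SemidirectProduct.inl (Multiplicative.ofAdd e) from rfl,
      show aGen d ⟨d - 1, by have := hd; omega⟩ = SemidirectProduct.inl (Multiplicative.ofAdd f) from rfl,
      ← map_zpow, ← map_mul, ← ofAdd_zsmul, ← ofAdd_add]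
  rw [lhs, rhs, SemidirectProduct.inl_inj]
  constructor
  · intro h
    have h2 := congrArg Multiplicative.toAdd h
    simp only [toAdd_ofAdd] at h2
    have h3 := congrFun h2 ⟨d - 1, by have := hd; omega⟩
    have hed : e ⟨d - 1, by have := hd; omega⟩ = 0 := by
      rw [he, Pi.single_apply,
        if_neg (by intro hc; have := congrArg Fin.val hc; simp at this; omega)]
    have hfd : f ⟨d - 1, by have := hd; omega⟩ = 1 := by rw [hf, Pi.single_apply, if_pos rfl]
    simp only [Pi.add_apply, Pi.smul_apply, hed, hfd, smul_eq_mul, mul_one, zero_add] at h3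
    rw [hg, h3]
  · intro h
    rw [h]
    simp

theorem tGen_zpow (d : ℕ) (r : ℤ) :
    tGen d ^ r = SemidirectProduct.inr (Multiplicative.ofAdd r) := by
  rw [tGen, ← map_zpow, ← ofAdd_zsmul, smul_eq_mul, mul_one]

theorem mem_A_inl (d : ℕ) (v : Multiplicative (Fin d → ℤ)) :
    SemidirectProduct.inl v ∈ A d := by
  set x : Fin d → ℤ := Multiplicative.toAdd v with hx
  have h1 : ∀ i : Fin d, ∀ c : ℤ, SemidirectProduct.inl
      (Multiplicative.ofAdd (Pi.single i c)) ∈ A d := by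
    intro i c
    have : SemidirectProduct.inl (Multiplicative.ofAdd (Pi.single i c)) = aGen d i ^ c := by
      rw [aGen, ← map_zpow, ← ofAdd_zsmul]
      have hsm : c • Pi.single i (1:ℤ) = (Pi.single i c : Fin d → ℤ) := by
        funext j; simp [Pi.single_apply, mul_comm]
      rw [hsm]
    rw [this]
    exact zpow_mem (Subgroup.subset_closure (Set.mem_range_self i)) _
  have h2 : ∀ s : Finset (Fin d), SemidirectProduct.inl
      (Multiplicative.ofAdd (∑ i ∈ s, Pi.single i (x i))) ∈ A d := by
    intro s
    induction s using Finset.induction with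
    | empty => simpa using (A d).one_mem
    | insert _ _ hni ih =>
        rw [Finset.sum_insert hni, ofAdd_add, map_mul]
        exact mul_mem (h1 _ _) ih
  have h3 := h2 Finset.univ
  rw [Finset.univ_sum_single] at h3
  exact h3

theorem right_eq_of_mem_A (d : ℕ) (x : Gamma d) (hxA : x ∈ A d) : x.right = 1 := by
  have : A d ≤ (SemidirectProduct.rightHom :
      Gamma d →* Multiplicative ℤ).ker := by
    rw [A]
    apply Subgroup.closure_le _ |>.2
    rintro _ ⟨i, rfl⟩
    simp [aGen, MonoidHom.mem_ker]
  exact this hxA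

theorem right_iff (d : ℕ) (r : ℤ) (g : Gamma d) :
    g.right = Multiplicative.ofAdd r ↔ ∃ x ∈ A d, g = tGen d ^ r * x := by
  constructor
  · intro h
    refine ⟨(tGen d ^ r)⁻¹ * g, ?_, by group⟩
    have hr : ((tGen d ^ r)⁻¹ * g).right = 1 := by
      rw [SemidirectProduct.mul_right, SemidirectProduct.inv_right, tGen_zpow,
        SemidirectProduct.right_inr, h, inv_mul_cancel]
    have := SemidirectProduct.inl_left_mul_inr_right ((tGen d ^ r)⁻¹ * g)
    rw [hr, map_one, mul_one] at this
    rw [← this]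
    exact mem_A_inl d _
  · rintro ⟨x, hxA, rfl⟩
    rw [SemidirectProduct.mul_right, right_eq_of_mem_A d x hxA, mul_one, tGen_zpow,
      SemidirectProduct.right_inr]

/-- The height `R' g = toAdd g.right`. -/
noncomputable def ht (d : ℕ) (g : Gamma d) : ℤ := Multiplicative.toAdd g.right

theorem ht_mul (d : ℕ) (g h : Gamma d) : ht d (g * h) = ht d g + ht d h := rfl

theorem ht_tGen (d : ℕ) : ht d (tGen d) = 1 := rfl

theorem letter_cases (d : ℕ) (x : Gamma d) (hx : x ∈ gens d ∨ x⁻¹ ∈ gens d) :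
    (ht d x = 1 ∧ x = tGen d) ∨ (ht d x = -1 ∧ x = (tGen d)⁻¹) ∨ ht d x = 0 := by
  rcases hx with hx | hx
  · rcases hx with hx | ⟨i, rfl⟩
    · exact Or.inl ⟨by rw [hx]; rfl, hx⟩
    · exact Or.inr (Or.inr rfl)
  · rcases hx with hx | ⟨i, hi⟩
    · refine Or.inr (Or.inl ⟨?_, by rw [← hx]; group⟩)
      have : x = (tGen d)⁻¹ := by rw [← hx]; group
      rw [this]
      rfl
    · have : x = (aGen d i)⁻¹ := by rw [hi]; group
      rw [this]
      refine Or.inr (Or.inr ?_)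
      show Multiplicative.toAdd (aGen d i)⁻¹.right = 0
      rw [SemidirectProduct.inv_right]
      rfl

theorem key_list (d : ℕ) (l : List (Gamma d))
    (hl : ∀ x ∈ l, x ∈ gens d ∨ x⁻¹ ∈ gens d) :
    (ht d l.prod).natAbs ≤ l.length ∧
      ((ht d l.prod).natAbs = l.length →
        l = List.replicate l.length (if 0 ≤ ht d l.prod then tGen d else (tGen d)⁻¹)) := by
  induction l with
  | nil => simp [ht]
  | cons a l ih =>
      obtain ⟨ih1, ih2⟩ := ih (fun x hx => hl x (List.mem_cons_of_mem a hx))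
      have ha := letter_cases d a (hl a List.mem_cons_self)
      have hma : (ht d a).natAbs ≤ 1 := by
        rcases ha with ⟨h, _⟩ | ⟨h, _⟩ | h <;> rw [h] <;> simp
      rw [List.prod_cons, ht_mul]
      set s' := ht d l.prod with hs'
      constructor
      · simp only [List.length_cons]
        omega
      · intro heq
        simp only [List.length_cons] at heq
        -- |ht a + s'| = l.length + 1, |ht a| ≤ 1, |s'| ≤ l.length
        have h1 : (ht d a) = 1 ∧ 0 ≤ s' ∨ (ht d a) = -1 ∧ s' ≤ 0 := by omega
        have hs'abs : s'.natAbs = l.length := by omega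
        rcases h1 with ⟨hta, hpos⟩ | ⟨hta, hneg⟩
        · have haT : a = tGen d := by
            rcases ha with ⟨_, h⟩ | ⟨h, _⟩ | h <;> first | exact h | omega
          simp only [List.length_cons]
          rw [if_pos (by omega), List.replicate_succ, haT]
          congr 1
          have := ih2 hs'abs
          rwa [if_pos hpos] at this
        · have haT : a = (tGen d)⁻¹ := by
            rcases ha with ⟨h, _⟩ | ⟨_, h⟩ | h <;> first | exact h | omega
          simp only [List.length_cons]
          rw [if_neg (by omega), List.replicate_succ, haT]
          congr 1
          have := ih2 hs'abs
          by_cases h0 : s' = 0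
          · have hl0 : l.length = 0 := by omega
            rw [List.length_eq_zero_iff] at hl0
            rw [hl0]
            simp
          · rwa [if_neg (by omega)] at this

theorem closure_gens (d : ℕ) : Subgroup.closure (gens d) = ⊤ := by
  rw [eq_top_iff]
  intro g _
  have hA : ∀ v, SemidirectProduct.inl v ∈ Subgroup.closure (gens d) := fun v =>
    Subgroup.closure_mono (Set.subset_insert _ _) (mem_A_inl d v)
  have htm : tGen d ∈ Subgroup.closure (gens d) :=
    Subgroup.subset_closure (Set.mem_insert _ _)
  have hinr : SemidirectProduct.inr g.right ∈ Subgroup.closure (gens d) := by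
    have : SemidirectProduct.inr g.right = tGen d ^ (Multiplicative.toAdd g.right) := by
      rw [tGen_zpow]; rfl
    rw [this]
    exact zpow_mem htm _
  rw [← SemidirectProduct.inl_left_mul_inr_right g]
  exact mul_mem (hA _) hinr

theorem exists_word (d : ℕ) (g : Gamma d) :
    ∃ l : List (Gamma d), (∀ x ∈ l, x ∈ gens d ∨ x⁻¹ ∈ gens d) ∧ l.prod = g := by
  have hg : g ∈ Subgroup.closure (gens d) := by rw [closure_gens]; trivial
  rw [← Subgroup.mem_toSubmonoid, Subgroup.closure_toSubmonoid] at hg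
  obtain ⟨l, hl, hp⟩ := Submonoid.exists_list_of_mem_closure hg
  refine ⟨l, fun x hx => ?_, hp⟩
  rcases hl x hx with h | h
  · exact Or.inl h
  · exact Or.inr (Set.mem_inv.mp h)

theorem wl_le (d : ℕ) (g : Gamma d) (l : List (Gamma d))
    (hl : ∀ x ∈ l, x ∈ gens d ∨ x⁻¹ ∈ gens d) (hp : l.prod = g) : wl d g ≤ l.length :=
  Nat.sInf_le ⟨l, rfl, hl, hp⟩

theorem wl_witness (d : ℕ) (g : Gamma d) :
    ∃ l : List (Gamma d), l.length = wl d g ∧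
      (∀ x ∈ l, x ∈ gens d ∨ x⁻¹ ∈ gens d) ∧ l.prod = g := by
  have hne : {n | ∃ l : List (Gamma d), l.length = n ∧
      (∀ x ∈ l, x ∈ gens d ∨ x⁻¹ ∈ gens d) ∧ l.prod = g}.Nonempty := by
    obtain ⟨l, hl, hp⟩ := exists_word d g
    exact ⟨l.length, l, rfl, hl, hp⟩
  exact Nat.sInf_mem hne

theorem pow_natAbs (d : ℕ) (r : ℤ) :
    (if 0 ≤ r then tGen d else (tGen d)⁻¹) ^ r.natAbs = tGen d ^ r := by
  by_cases h : 0 ≤ r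
  · rw [if_pos h, ← zpow_natCast]; congr 1; omega
  · rw [if_neg h, inv_pow, ← zpow_natCast, ← zpow_neg]; congr 1; omega

/-- An element `g ∈ Γ_d` conjugates `a_{d-1}` to `a_{d-1} a_d^r` iff `g = t^r x` with
`x ∈ A_d`; consequently any such `g` has `d(1,g) ≥ |r|`, and `t^r` is the unique such element
of word length `|r|`. -/
theorem conjugating_onto_central_power (d : ℕ) (hd : 2 ≤ d) (r : ℤ) :
    (∀ g : Gamma d,
      g⁻¹ * aGen d ⟨d - 2, by omega⟩ * g =
          aGen d ⟨d - 2, by omega⟩ * aGen d ⟨d - 1, by omega⟩ ^ r ↔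
        ∃ x ∈ A d, g = tGen d ^ r * x) ∧
    (∀ g : Gamma d,
      g⁻¹ * aGen d ⟨d - 2, by omega⟩ * g =
          aGen d ⟨d - 2, by omega⟩ * aGen d ⟨d - 1, by omega⟩ ^ r →
        r.natAbs ≤ wl d g) ∧
    wl d (tGen d ^ r) = r.natAbs ∧
    (∀ g : Gamma d,
      g⁻¹ * aGen d ⟨d - 2, by omega⟩ * g =
          aGen d ⟨d - 2, by omega⟩ * aGen d ⟨d - 1, by omega⟩ ^ r →
        wl d g = r.natAbs → g = tGen d ^ r) := by
  have lower : ∀ g : Gamma d,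
      g⁻¹ * aGen d ⟨d - 2, by omega⟩ * g =
          aGen d ⟨d - 2, by omega⟩ * aGen d ⟨d - 1, by omega⟩ ^ r →
        r.natAbs ≤ wl d g := by
    intro g hg
    have hr : ht d g = r := by
      rw [ht, (cond_iff d hd r g).1 hg, toAdd_ofAdd]
    obtain ⟨l, hlen, hmem, hprod⟩ := wl_witness d g
    have := (key_list d l hmem).1
    rw [hprod, hr] at this
    omega
  have tcond : (tGen d ^ r)⁻¹ * aGen d ⟨d - 2, by omega⟩ * (tGen d ^ r) =
      aGen d ⟨d - 2, by omega⟩ * aGen d ⟨d - 1, by omega⟩ ^ r := by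
    rw [cond_iff d hd r, tGen_zpow, SemidirectProduct.right_inr]
  refine ⟨?_, lower, ?_, ?_⟩
  · intro g
    rw [cond_iff d hd r, right_iff]
  · refine le_antisymm ?_ (lower _ tcond)
    have := wl_le d (tGen d ^ r)
      (List.replicate r.natAbs (if 0 ≤ r then tGen d else (tGen d)⁻¹)) ?_ ?_
    · rwa [List.length_replicate] at this
    · intro x hx
      rw [List.eq_of_mem_replicate hx]
      by_cases h : 0 ≤ r
      · rw [if_pos h]
        exact Or.inl (Set.mem_insert _ _)
      · rw [if_neg h]
        exact Or.inr (by rw [inv_inv]; exact Set.mem_insert _ _)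
    · rw [List.prod_replicate, pow_natAbs]
  · intro g hg hwl
    have hr : ht d g = r := by
      rw [ht, (cond_iff d hd r g).1 hg, toAdd_ofAdd]
    obtain ⟨l, hlen, hmem, hprod⟩ := wl_witness d g
    have hnat : (ht d l.prod).natAbs = l.length := by
      rw [hprod, hr, hlen, hwl]
    have := (key_list d l hmem).2 hnat
    rw [hprod, hr] at this
    rw [← hprod, this, List.prod_replicate, hlen, hwl, pow_natAbs]

end ModelFiliform
end

section
/- For every integer d ≥ 1 there is a constant C_d ≥ 1 such that for every n ≥ 1 and every g ∈ Γ_d with normal form g = t^r a_1^{p_1} a_2^{p_2} ⋯ a_d^{p_d}, if |r| ≤ n and |p_i| ≤ n^i for i = 1, …, d, then d(1,g) ≤ C_d · n. -/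
namespace ModelFiliform

section Basic
variable {d : ℕ}

/-- `inlv v` is the element of `Γ_d` corresponding to `v ∈ ℤ^d`. -/
noncomputable def inlv (d : ℕ) (v : Fin d → ℤ) : Gamma d :=
  SemidirectProduct.inl (Multiplicative.ofAdd v)

theorem inlv_add (v w : Fin d → ℤ) : inlv d (v + w) = inlv d v * inlv d w := by
  rw [inlv, inlv, inlv, ← map_mul]
  rfl

theorem inlv_zero : inlv d (0 : Fin d → ℤ) = 1 := by
  rw [inlv]
  exact map_one _

theorem inlv_sub (v w : Fin d → ℤ) : inlv d (v - w) = inlv d v * (inlv d w)⁻¹ := by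
  have := inlv_add (v - w) w
  rw [sub_add_cancel] at this
  rw [this]
  group

theorem inlv_zsmul (c : ℤ) (v : Fin d → ℤ) : inlv d (c • v) = (inlv d v) ^ c := by
  rw [inlv, inlv, ← map_zpow]
  rfl

theorem aGen_eq (i : Fin d) : aGen d i = inlv d (Pi.single i 1) := rfl

theorem phi_apply_eq (v : Fin d → ℤ) :
    phi d v = (1 + shiftMap d : Module.End ℤ (Fin d → ℤ)) v := by
  have h2 : (phiUnit d : Module.End ℤ (Fin d → ℤ)) = 1 + shiftMap d :=
    IsUnit.unit_spec _
  rw [← h2]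
  rfl

/-- The key conjugation relation. -/
theorem conj_tGen (v : Fin d → ℤ) :
    inlv d ((1 + shiftMap d : Module.End ℤ (Fin d → ℤ)) v) = (tGen d)⁻¹ * inlv d v * tGen d := by
  have h := SemidirectProduct.inl_aut (φ := act d) (Multiplicative.ofAdd (-1 : ℤ))
      (Multiplicative.ofAdd v)
  have hact : act d (Multiplicative.ofAdd (-1 : ℤ)) = phiAut d := by
    simp [act]
  rw [hact] at h
  have hphi : phiAut d (Multiplicative.ofAdd v)
      = Multiplicative.ofAdd ((1 + shiftMap d : Module.End ℤ (Fin d → ℤ)) v) := by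
    rw [← phi_apply_eq]
    rfl
  rw [hphi] at h
  rw [inlv, h]
  have ht : (tGen d)⁻¹ = SemidirectProduct.inr (Multiplicative.ofAdd (-1 : ℤ)) := by
    rw [tGen, ← map_inv]; rfl
  rw [ht]
  congr 1

end Basic
section Good
variable {d : ℕ}

/-- `Good g n` : `g` is a product of at most `n` generators or inverses. -/
def Good (d : ℕ) (g : Gamma d) (n : ℕ) : Prop :=
  ∃ l : List (Gamma d), (∀ x ∈ l, x ∈ gens d ∨ x⁻¹ ∈ gens d) ∧ l.prod = g ∧ l.length ≤ n

theorem wl_le_of_good {g : Gamma d} {n : ℕ} (h : Good d g n) : wl d g ≤ n := by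
  obtain ⟨l, hmem, hprod, hlen⟩ := h
  have : wl d g ≤ l.length := Nat.sInf_le ⟨l, rfl, hmem, hprod⟩
  omega

theorem good_one : Good d (1 : Gamma d) 0 := ⟨[], by simp, by simp, by simp⟩

theorem good_mono {g : Gamma d} {m n : ℕ} (h : Good d g m) (hmn : m ≤ n) : Good d g n := by
  obtain ⟨l, h1, h2, h3⟩ := h
  exact ⟨l, h1, h2, h3.trans hmn⟩

theorem good_mul {g h : Gamma d} {m n : ℕ} (hg : Good d g m) (hh : Good d h n) :
    Good d (g * h) (m + n) := by
  obtain ⟨l1, h1, h2, h3⟩ := hg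
  obtain ⟨l2, h4, h5, h6⟩ := hh
  refine ⟨l1 ++ l2, ?_, by simp [h2, h5], by simp; omega⟩
  intro x hx
  rcases List.mem_append.1 hx with h | h
  · exact h1 x h
  · exact h4 x h

theorem good_inv {g : Gamma d} {n : ℕ} (hg : Good d g n) : Good d g⁻¹ n := by
  obtain ⟨l, h1, h2, h3⟩ := hg
  refine ⟨(l.map (·⁻¹)).reverse, ?_, ?_, by simpa using h3⟩
  · intro x hx
    simp only [List.mem_reverse, List.mem_map] at hx
    obtain ⟨y, hy, rfl⟩ := hx
    rcases h1 y hy with h | h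
    · right; simpa using h
    · left; simpa using h
  · rw [List.prod_reverse_noncomm]
    simp only [List.map_map]
    rw [← h2]
    congr 1
    simp [Function.comp_def]

theorem good_pow {g : Gamma d} {n : ℕ} (hg : Good d g n) (k : ℕ) :
    Good d (g ^ k) (k * n) := by
  induction k with
  | zero => simpa using good_one
  | succ k ih =>
      have := good_mul ih hg
      rw [← pow_succ] at this
      have he : (k + 1) * n = k * n + n := by ring
      rw [he]
      exact this

theorem good_zpow {g : Gamma d} {n : ℕ} (hg : Good d g n) (c : ℤ) :
    Good d (g ^ c) (c.natAbs * n) := by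
  obtain ⟨k, rfl | rfl⟩ := Int.eq_nat_or_neg c
  · rw [zpow_natCast]
    simpa using good_pow hg k
  · rw [zpow_neg, zpow_natCast]
    have h2 := good_inv (good_pow hg k)
    simpa using h2

theorem good_tGen_zpow (r : ℤ) : Good d ((tGen d) ^ r) r.natAbs := by
  have h1 : Good d (tGen d) 1 :=
    ⟨[tGen d], by intro x hx; simp at hx; subst hx; left; exact Set.mem_insert _ _,
     by simp, by simp⟩
  simpa using good_zpow h1 r

theorem good_aGen_zpow (i : Fin d) (c : ℤ) : Good d ((aGen d i) ^ c) c.natAbs := by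
  have h1 : Good d (aGen d i) 1 :=
    ⟨[aGen d i], by
      intro x hx; simp at hx; subst hx; left
      exact Set.mem_insert_of_mem _ ⟨i, rfl⟩, by simp, by simp⟩
  simpa using good_zpow h1 c

theorem good_single (i : Fin d) (c : ℤ) :
    Good d (inlv d (c • Pi.single i 1)) c.natAbs := by
  rw [inlv_zsmul, ← aGen_eq]
  exact good_aGen_zpow i c

/-- conjugating by `t^k` costs `2k`. -/
theorem good_conj_pow {v : Fin d → ℤ} {n : ℕ} (hv : Good d (inlv d v) n) (k : ℕ) :
    Good d (inlv d (((1 + shiftMap d : Module.End ℤ (Fin d → ℤ)) ^ k) v)) (2 * k + n) := by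
  induction k generalizing v n with
  | zero => simpa using hv
  | succ k ih =>
      have h1 : Good d (inlv d ((1 + shiftMap d : Module.End ℤ (Fin d → ℤ)) v)) (2 + n) := by
        rw [conj_tGen]
        have ht : Good d (tGen d) 1 := by simpa using good_tGen_zpow 1
        have := good_mul (good_mul (good_inv ht) hv) ht
        simpa [add_comm, add_assoc, add_left_comm] using this
      have := ih h1
      rw [pow_succ, Module.End.mul_apply] at *
      exact good_mono this (by omega)

end Good
section LinAlg
variable {d : ℕ}

/-- abbreviation for `φ = 1 + N` as an endomorphism -/
noncomputable abbrev fEnd (d : ℕ) : Module.End ℤ (Fin d → ℤ) := 1 + shiftMap d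

theorem fpow_coord (n : ℕ) (x : Fin d → ℤ) (l : Fin d) :
    ((fEnd d ^ n) x) l
      = ∑ m ∈ Finset.range (n + 1), (n.choose m : ℤ) * ((shiftMap d ^ (n - m)) x l) := by
  have h := (Commute.one_left (shiftMap d : Module.End ℤ (Fin d → ℤ))).add_pow n
  rw [fEnd, h]
  rw [LinearMap.coe_sum, Finset.sum_apply, Finset.sum_apply]
  apply Finset.sum_congr rfl
  intro m _
  rw [one_pow, one_mul, Module.End.mul_apply, Module.End.natCast_apply, map_nsmul]
  rw [Pi.smul_apply, nsmul_eq_mul]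

/-- support condition: `x_l = 0` for `l < i`. -/
def Supp (d i : ℕ) (x : Fin d → ℤ) : Prop := ∀ l : Fin d, (l : ℕ) < i → x l = 0

theorem supp_single (i : Fin d) (c : ℤ) : Supp d (i : ℕ) (c • Pi.single i 1) := by
  intro l hl
  have : l ≠ i := by intro h; subst h; omega
  simp [Pi.single_apply, this]

theorem supp_sub {i : ℕ} {x y : Fin d → ℤ} (hx : Supp d i x) (hy : Supp d i y) :
    Supp d i (x - y) := fun l hl => by simp [hx l hl, hy l hl]

theorem supp_zero_of_ge {i : ℕ} (hi : d ≤ i) {x : Fin d → ℤ} (hx : Supp d i x) : x = 0 := by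
  funext l
  exact hx l (lt_of_lt_of_le l.isLt hi)

/-- (i): `G x := f^n x - x` raises support. -/
theorem supp_G {n i : ℕ} {x : Fin d → ℤ} (hx : Supp d i x) :
    Supp d (i + 1) ((fEnd d ^ n) x - x) := by
  intro l hl
  simp only [Pi.sub_apply, fpow_coord]
  have hxl : ∀ m ∈ Finset.range (n + 1), (n.choose m : ℤ) * ((shiftMap d ^ (n - m)) x l)
      = if m = n then x l else 0 := by
    intro m hm
    rw [shiftMap_pow_apply]
    by_cases hmn : m = n
    · subst hmn
      simp
    · have h1 : 1 ≤ n - m := by simp at hm; omega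
      rw [if_neg hmn]
      split_ifs with h2
      · rw [hx ⟨(l:ℕ) - (n - m), lt_of_le_of_lt (Nat.sub_le _ _) l.isLt⟩
            (show (l:ℕ) - (n - m) < i by omega)]
        ring
      · ring
  rw [Finset.sum_congr rfl hxl, Finset.sum_ite_eq' (Finset.range (n+1)) n (fun _ => x l)]
  simp

/-- (ii): the exact value at coordinate `i+1`. -/
theorem G_coord_succ {n i : ℕ} {x : Fin d → ℤ} (hx : Supp d i x) (hn : 1 ≤ n)
    (l : Fin d) (hl : (l : ℕ) = i + 1) (li : Fin d) (hli : (li : ℕ) = i) :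
    ((fEnd d ^ n) x - x) l = n * x li := by
  simp only [Pi.sub_apply, fpow_coord]
  have hxl : ∀ m ∈ Finset.range (n + 1), (n.choose m : ℤ) * ((shiftMap d ^ (n - m)) x l)
      = (if m = n then x l else 0) + (if m = n - 1 then (n : ℤ) * x li else 0) := by
    intro m hm
    simp only [Finset.mem_range] at hm
    rw [shiftMap_pow_apply]
    by_cases hmn : m = n
    · rw [if_pos hmn, if_neg (by omega), hmn]
      simp
    · rw [if_neg hmn]
      by_cases hmn1 : m = n - 1
      · rw [if_pos hmn1, hmn1]
        have h1 : n - (n - 1) = 1 := by omega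
        rw [h1, dif_pos (show 1 ≤ (l : ℕ) by omega)]
        have hfin : (⟨(l : ℕ) - 1, lt_of_le_of_lt (Nat.sub_le _ _) l.isLt⟩ : Fin d) = li := by
          apply Fin.ext; simp only [Fin.val_mk]; omega
        rw [hfin]
        have hch : n.choose (n - 1) = n := by
          rw [← Nat.choose_symm (by omega : n - 1 ≤ n), h1, Nat.choose_one_right]
        rw [hch]
        ring
      · rw [if_neg hmn1]
        have h1 : 2 ≤ n - m := by omega
        split_ifs with h2
        · rw [hx ⟨(l:ℕ) - (n - m), lt_of_le_of_lt (Nat.sub_le _ _) l.isLt⟩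
              (show (l:ℕ) - (n - m) < i by omega)]
          ring
        · ring
  rw [Finset.sum_congr rfl hxl, Finset.sum_add_distrib,
    Finset.sum_ite_eq' (Finset.range (n+1)) n (fun _ => x l),
    Finset.sum_ite_eq' (Finset.range (n+1)) (n-1) (fun _ => (n:ℤ) * x li)]
  rw [if_pos (by simp), if_pos (by simp only [Finset.mem_range]; omega)]
  ring

end LinAlg
section Bdd
variable {d : ℕ}

theorem natAbs_sum_le (s : Finset ℕ) (f : ℕ → ℤ) :
    (∑ i ∈ s, f i).natAbs ≤ ∑ i ∈ s, (f i).natAbs := by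
  classical
  induction s using Finset.induction with
  | empty => simp
  | insert _ _ h ih =>
      rw [Finset.sum_insert h, Finset.sum_insert h]
      calc _ ≤ _ := Int.natAbs_add_le _ _
      _ ≤ _ := by omega

/-- coordinate bound relative to support level `i`. -/
def Bdd (d n B i : ℕ) (x : Fin d → ℤ) : Prop :=
  ∀ l : Fin d, (x l).natAbs ≤ B * n ^ ((l : ℕ) - i)

/-- (iii): one application of `G` multiplies the graded bound by `d * n`. -/
theorem bdd_G {n B i : ℕ} (hn : 1 ≤ n) {x : Fin d → ℤ} (hx : Supp d i x)
    (hb : Bdd d n B i x) : Bdd d n (d * n * B) (i + 1) ((fEnd d ^ n) x - x) := by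
  intro l
  by_cases hl : (l : ℕ) < i + 1
  · rw [supp_G hx l hl]
    simp
  · push_neg at hl
    have hcoord : ((fEnd d ^ n) x - x) l
        = ∑ m ∈ Finset.range n, (n.choose m : ℤ) * ((shiftMap d ^ (n - m)) x l) := by
      simp only [Pi.sub_apply, fpow_coord, Finset.sum_range_succ]
      simp
    rw [hcoord]
    set A : ℕ := n * B * n ^ ((l : ℕ) - (i + 1)) with hA
    have hterm : ∀ m ∈ Finset.range n,
        ((n.choose m : ℤ) * ((shiftMap d ^ (n - m)) x l)).natAbs
          ≤ if n - m ≤ (l : ℕ) - i then A else 0 := by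
      intro m hm
      simp only [Finset.mem_range] at hm
      rw [shiftMap_pow_apply]
      have hs1 : 1 ≤ n - m := by omega
      by_cases h2 : n - m ≤ (l : ℕ)
      · rw [dif_pos h2]
        by_cases h3 : (l : ℕ) - (n - m) < i
        · rw [hx ⟨(l:ℕ) - (n - m), lt_of_le_of_lt (Nat.sub_le _ _) l.isLt⟩ h3]
          rw [if_neg (by omega)]
          simp
        · rw [if_pos (by omega)]
          rw [Int.natAbs_mul, Int.natAbs_natCast]
          have hc : n.choose m ≤ n ^ (n - m) := by
            have h4 : n.choose m = n.choose (n - (n - m)) := by congr 1; omega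
            rw [h4, Nat.choose_symm (by omega)]
            exact Nat.choose_le_pow _ _
          have hb2 : (x ⟨(l:ℕ) - (n - m), lt_of_le_of_lt (Nat.sub_le _ _) l.isLt⟩).natAbs
              ≤ B * n ^ (((l:ℕ) - (n - m)) - i) := hb _
          calc n.choose m * (x ⟨(l:ℕ) - (n - m),
                lt_of_le_of_lt (Nat.sub_le _ _) l.isLt⟩).natAbs
              ≤ n ^ (n - m) * (B * n ^ (((l:ℕ) - (n - m)) - i)) :=
                Nat.mul_le_mul hc hb2
            _ = B * (n ^ ((n - m) + ((((l:ℕ) - (n - m)) - i)))) := by rw [pow_add]; ring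
            _ = B * n ^ (((l : ℕ) - (i + 1)) + 1) := by
                rw [show (n - m) + ((((l:ℕ) - (n - m)) - i)) = ((l : ℕ) - (i + 1)) + 1
                  by omega]
            _ = A := by rw [hA, pow_succ]; ring
      · rw [dif_neg h2, if_neg (by omega)]
        simp
    calc (∑ m ∈ Finset.range n, (n.choose m : ℤ) * ((shiftMap d ^ (n - m)) x l)).natAbs
        ≤ ∑ m ∈ Finset.range n,
            ((n.choose m : ℤ) * ((shiftMap d ^ (n - m)) x l)).natAbs := natAbs_sum_le _ _
      _ ≤ ∑ m ∈ Finset.range n, (if n - m ≤ (l : ℕ) - i then A else 0) :=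
          Finset.sum_le_sum hterm
      _ = ∑ m ∈ (Finset.range n).filter (fun m => n - m ≤ (l : ℕ) - i), A := by
          rw [Finset.sum_filter]
      _ = ((Finset.range n).filter (fun m => n - m ≤ (l : ℕ) - i)).card * A := by
          rw [Finset.sum_const, smul_eq_mul]
      _ ≤ d * A := by
          apply Nat.mul_le_mul_right
          have hsub : (Finset.range n).filter (fun m => n - m ≤ (l : ℕ) - i)
              ⊆ Finset.Ico (n - ((l:ℕ) - i)) n := by
            intro m hm
            simp only [Finset.mem_filter, Finset.mem_range] at hm
            simp only [Finset.mem_Ico]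
            omega
          calc _ ≤ (Finset.Ico (n - ((l:ℕ) - i)) n).card := Finset.card_le_card hsub
            _ = n - (n - ((l:ℕ) - i)) := by rw [Nat.card_Ico]
            _ ≤ d := by have := l.isLt; omega
      _ = d * n * B * n ^ ((l : ℕ) - (i + 1)) := by rw [hA]; ring

end Bdd
section Wv
variable {d : ℕ}

/-- The iterated vector `wv m = (φ^n - 1)^m (c • e_i)`. -/
noncomputable def wv (d n : ℕ) (c : ℤ) (i : Fin d) : ℕ → (Fin d → ℤ)
  | 0 => c • Pi.single i 1
  | m + 1 => (fEnd d ^ n) (wv d n c i m) - wv d n c i m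

theorem wv_supp (n : ℕ) (c : ℤ) (i : Fin d) (m : ℕ) : Supp d ((i : ℕ) + m) (wv d n c i m) := by
  induction m with
  | zero => exact supp_single i c
  | succ m ih =>
      have := supp_G (n := n) ih
      rw [show (i:ℕ) + m + 1 = (i:ℕ) + (m+1) by omega] at this
      exact this

theorem wv_bdd (n : ℕ) (hn : 1 ≤ n) (c : ℤ) (i : Fin d) (m : ℕ) :
    Bdd d n (c.natAbs * (d * n) ^ m) ((i : ℕ) + m) (wv d n c i m) := by
  induction m with
  | zero =>
      intro l
      simp only [wv, Pi.smul_apply, smul_eq_mul, Int.natAbs_mul]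
      by_cases h : l = i
      · subst h
        simp
      · rw [Pi.single_apply, if_neg (by exact fun hh => h (by exact hh.symm ▸ rfl))]
        simp
  | succ m ih =>
      have := bdd_G hn (wv_supp n c i m) ih
      rw [show (i:ℕ) + m + 1 = (i:ℕ) + (m+1) by omega] at this
      have he : d * n * (c.natAbs * (d * n) ^ m) = c.natAbs * (d * n) ^ (m + 1) := by ring
      rw [he] at this
      exact this

theorem wv_coord (n : ℕ) (hn : 1 ≤ n) (c : ℤ) (i : Fin d) (m : ℕ) (h : (i : ℕ) + m < d) :
    wv d n c i m ⟨(i : ℕ) + m, h⟩ = c * (n : ℤ) ^ m := by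
  induction m with
  | zero =>
      have : (⟨(i:ℕ) + 0, h⟩ : Fin d) = i := by apply Fin.ext; simp
      rw [this]
      simp [wv]
  | succ m ih =>
      have hm : (i : ℕ) + m < d := by omega
      rw [show wv d n c i (m+1) = (fEnd d ^ n) (wv d n c i m) - wv d n c i m from rfl]
      rw [G_coord_succ (wv_supp n c i m) hn _ (by simp; omega) ⟨(i:ℕ)+m, hm⟩ (by simp)]
      rw [ih hm, pow_succ]
      ring

theorem wv_good (n : ℕ) (hn : 1 ≤ n) (c : ℤ) (i : Fin d) (m : ℕ) :
    Good d (inlv d (wv d n c i m)) (4 ^ m * (c.natAbs + n)) := by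
  induction m with
  | zero =>
      have := good_single i c
      exact good_mono (by simpa [wv] using this) (by nlinarith [Nat.one_le_iff_ne_zero.mp hn])
  | succ m ih =>
      rw [show wv d n c i (m+1) = (fEnd d ^ n) (wv d n c i m) - wv d n c i m from rfl]
      rw [inlv_sub]
      have h1 : Good d (inlv d ((fEnd d ^ n) (wv d n c i m)))
          (2 * n + 4 ^ m * (c.natAbs + n)) := good_conj_pow ih n
      have h2 := good_mul h1 (good_inv ih)
      apply good_mono h2
      have h4 : 1 ≤ 4 ^ m := Nat.one_le_pow _ _ (by norm_num)
      have hX : n ≤ 4 ^ m * (c.natAbs + n) :=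
        le_trans (Nat.le_add_left n c.natAbs) (Nat.le_mul_of_pos_left _ h4)
      have h5 : 4 ^ (m+1) * (c.natAbs + n) = 4 * (4 ^ m * (c.natAbs + n)) := by ring
      omega

/-- base-`n` digits with controlled top digit. -/
theorem digits (n : ℕ) (hn : 1 ≤ n) :
    ∀ j : ℕ, ∀ v : ℤ, ∃ c : ℕ → ℤ,
      v = ∑ m ∈ Finset.range (j + 1), c m * (n : ℤ) ^ m ∧
      (∀ m, m < j → (c m).natAbs ≤ n) ∧
      (c j).natAbs * n ^ j ≤ v.natAbs + j * n ^ j := by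
  intro j
  induction j with
  | zero =>
      intro v
      exact ⟨fun _ => v, by simp, by omega, by simp⟩
  | succ j ih =>
      intro v
      set q := v / (n : ℤ) with hq
      set r := v % (n : ℤ) with hr
      have hvd : v = (n : ℤ) * q + r := (Int.mul_ediv_add_emod v n).symm
      have hr0 : 0 ≤ r := Int.emod_nonneg v (by exact_mod_cast (by omega : n ≠ 0))
      have hrn : r < n := Int.emod_lt_of_pos v (by exact_mod_cast hn)
      obtain ⟨c', hsum, hdig, htop⟩ := ih q
      refine ⟨fun m => if m = 0 then r else c' (m - 1), ?_, ?_, ?_⟩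
      · rw [Finset.sum_range_succ']
        have h00 : (fun m => if m = 0 then r else c' (m - 1)) 0 = r := by
          simp
        rw [h00]
        have : ∀ m ∈ Finset.range (j + 1),
            (if m + 1 = 0 then r else c' (m + 1 - 1)) * (n : ℤ) ^ (m + 1)
              = (n : ℤ) * (c' m * (n : ℤ) ^ m) := by
          intro m _
          rw [if_neg (by omega)]
          simp only [Nat.add_sub_cancel]
          ring
        rw [Finset.sum_congr rfl this, ← Finset.mul_sum, ← hsum]
        simp only [pow_zero, mul_one]
        omega
      · intro m hm
        show ((if m = 0 then r else c' (m - 1)).natAbs ≤ n)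
        by_cases h0 : m = 0
        · subst h0
          rw [if_pos rfl]
          omega
        · rw [if_neg h0]
          exact hdig _ (by omega)
      · show ((if j + 1 = 0 then r else c' (j + 1 - 1)).natAbs * n ^ (j+1)
            ≤ v.natAbs + (j+1) * n ^ (j+1))
        rw [if_neg (by omega)]
        simp only [Nat.add_sub_cancel]
        have hqv : q.natAbs * n ≤ v.natAbs + n := by
          have h2 : (0:ℤ) < (n:ℤ) := by exact_mod_cast hn
          have habs : |q| * (n:ℤ) ≤ |v| + n := by
            rcases abs_cases q with ⟨hq1, hq2⟩ | ⟨hq1, hq2⟩ <;>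
              rcases abs_cases v with ⟨hv1, hv2⟩ | ⟨hv1, hv2⟩ <;> nlinarith
          have : (q.natAbs : ℤ) * (n:ℤ) ≤ (v.natAbs : ℤ) + n := by
            rwa [Int.abs_eq_natAbs, Int.abs_eq_natAbs] at habs
          exact_mod_cast this
        calc (c' j).natAbs * n ^ (j + 1) = ((c' j).natAbs * n ^ j) * n := by ring
          _ ≤ (q.natAbs + j * n ^ j) * n := Nat.mul_le_mul_right _ htop
          _ = q.natAbs * n + j * n ^ (j + 1) := by rw [pow_succ]; ring
          _ ≤ (v.natAbs + n) + j * n ^ (j + 1) := by omega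
          _ ≤ v.natAbs + (j + 1) * n ^ (j + 1) := by
              have h1 : n ≤ n ^ (j+1) := Nat.le_self_pow (by omega) n
              nlinarith

end Wv
section Main
variable {d : ℕ}

theorem supp_sum {i k : ℕ} {F : ℕ → Fin d → ℤ}
    (h : ∀ m ∈ Finset.range k, Supp d i (F m)) :
    Supp d i (∑ m ∈ Finset.range k, F m) := by
  intro l hl
  rw [Finset.sum_apply]
  exact Finset.sum_eq_zero fun m hm => h m hm l hl

theorem good_sum {k : ℕ} {F : ℕ → Fin d → ℤ} {cost : ℕ → ℕ}
    (h : ∀ m ∈ Finset.range k, Good d (inlv d (F m)) (cost m)) :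
    Good d (inlv d (∑ m ∈ Finset.range k, F m)) (∑ m ∈ Finset.range k, cost m) := by
  induction k with
  | zero => simpa [inlv_zero] using good_one
  | succ k ih =>
      rw [Finset.sum_range_succ, Finset.sum_range_succ, inlv_add]
      exact good_mul (ih fun m hm => h m (by simp at hm ⊢; omega))
        (h k (by simp))

theorem handle_coord (n K : ℕ) (hn : 1 ≤ n) (j : Fin d) (v : Fin d → ℤ)
    (hbd : (v j).natAbs ≤ K * n ^ ((j : ℕ) + 1)) :
    ∃ u : Fin d → ℤ, Supp d (j : ℕ) u ∧ u j = v j ∧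
      (∀ l : Fin d, (u l).natAbs ≤ (d * ((K + d) * d ^ d)) * n ^ ((l : ℕ) + 1)) ∧
      Good d (inlv d u) ((d * (4 ^ d * (K + d + 1))) * n) := by
  have hd1 : 1 ≤ d := by have := j.isLt; omega
  obtain ⟨c, hsum, hdig, htop⟩ := digits n hn (j : ℕ) (v j)
  -- all digits bounded by (K + d) * n
  have hcall : ∀ m, m ≤ (j : ℕ) → (c m).natAbs ≤ (K + d) * n := by
    intro m hm
    rcases lt_or_eq_of_le hm with h | h
    · calc (c m).natAbs ≤ n := hdig m h
        _ ≤ (K + d) * n := Nat.le_mul_of_pos_left n (by omega)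
    · subst h
      have hpow : 0 < n ^ (j : ℕ) := Nat.pow_pos (by omega)
      apply Nat.le_of_mul_le_mul_right _ hpow
      calc (c (j:ℕ)).natAbs * n ^ (j:ℕ) ≤ (v j).natAbs + (j:ℕ) * n ^ (j:ℕ) := htop
        _ ≤ K * n ^ ((j:ℕ) + 1) + d * n ^ (j:ℕ) := by
            have := j.isLt
            have h2 : (j:ℕ) * n ^ (j:ℕ) ≤ d * n ^ (j:ℕ) :=
              Nat.mul_le_mul_right _ (by omega)
            omega
        _ ≤ (K + d) * n * n ^ (j:ℕ) := by
            rw [pow_succ]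
            have h3 : d * n ^ (j:ℕ) ≤ d * n * n ^ (j:ℕ) := by
              have : d * n ^ (j:ℕ) * 1 ≤ d * n ^ (j:ℕ) * n := Nat.mul_le_mul_left _ hn
              calc d * n ^ (j:ℕ) = d * n ^ (j:ℕ) * 1 := by ring
                _ ≤ d * n ^ (j:ℕ) * n := this
                _ = d * n * n ^ (j:ℕ) := by ring
            calc K * (n ^ (j:ℕ) * n) + d * n ^ (j:ℕ)
                = K * n * n ^ (j:ℕ) + d * n ^ (j:ℕ) := by ring
              _ ≤ K * n * n ^ (j:ℕ) + d * n * n ^ (j:ℕ) := by omega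
              _ = (K + d) * n * n ^ (j:ℕ) := by ring
  -- the base indices
  have hidx : ∀ m, m ≤ (j : ℕ) → (j : ℕ) - m < d := fun m _ => by
    have := j.isLt; omega
  set F : ℕ → (Fin d → ℤ) := fun m =>
    if h : m ≤ (j : ℕ) then wv d n (c m) ⟨(j:ℕ) - m, hidx m h⟩ m else 0 with hF
  set u : Fin d → ℤ := ∑ m ∈ Finset.range ((j:ℕ) + 1), F m with hu
  have hFsupp : ∀ m ∈ Finset.range ((j:ℕ)+1), Supp d (j:ℕ) (F m) := by
    intro m hm
    simp only [Finset.mem_range] at hm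
    rw [hF]
    simp only [dif_pos (by omega : m ≤ (j:ℕ))]
    have := wv_supp n (c m) ⟨(j:ℕ) - m, hidx m (by omega)⟩ m
    rwa [show ((⟨(j:ℕ) - m, hidx m (by omega)⟩ : Fin d) : ℕ) + m = (j:ℕ) by simp; omega] at this
  refine ⟨u, supp_sum hFsupp, ?_, ?_, ?_⟩
  · -- u j = v j
    rw [hu, Finset.sum_apply]
    have : ∀ m ∈ Finset.range ((j:ℕ)+1), F m j = c m * (n:ℤ) ^ m := by
      intro m hm
      simp only [Finset.mem_range] at hm
      rw [hF]
      simp only [dif_pos (by omega : m ≤ (j:ℕ))]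
      have hc := wv_coord n hn (c m) ⟨(j:ℕ) - m, hidx m (by omega)⟩ m
        (by simp; omega)
      rwa [show (⟨((⟨(j:ℕ) - m, hidx m (by omega)⟩ : Fin d) : ℕ) + m, _⟩ : Fin d) = j from
        Fin.ext (by simp; omega)] at hc
    rw [Finset.sum_congr rfl this, ← hsum]
  · -- coordinate bounds
    intro l
    rw [hu, Finset.sum_apply]
    calc (∑ m ∈ Finset.range ((j:ℕ)+1), F m l).natAbs
        ≤ ∑ m ∈ Finset.range ((j:ℕ)+1), (F m l).natAbs := natAbs_sum_le _ _
      _ ≤ ∑ _m ∈ Finset.range ((j:ℕ)+1), ((K + d) * d ^ d) * n ^ ((l:ℕ) + 1) := by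
          apply Finset.sum_le_sum
          intro m hm
          simp only [Finset.mem_range] at hm
          rw [hF]
          simp only [dif_pos (by omega : m ≤ (j:ℕ))]
          have hb := wv_bdd n hn (c m) ⟨(j:ℕ) - m, hidx m (by omega)⟩ m l
          rw [show ((⟨(j:ℕ) - m, hidx m (by omega)⟩ : Fin d) : ℕ) + m = (j:ℕ) by simp; omega]
            at hb
          by_cases hlj : (l : ℕ) < (j:ℕ)
          · have h0 : wv d n (c m) ⟨(j:ℕ) - m, hidx m (by omega)⟩ m l = 0 :=
              wv_supp n (c m) ⟨(j:ℕ) - m, hidx m (by omega)⟩ m l (by simp; omega)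
            rw [h0]
            simp
          · calc (wv d n (c m) ⟨(j:ℕ) - m, hidx m (by omega)⟩ m l).natAbs
                ≤ (c m).natAbs * (d * n) ^ m * n ^ ((l:ℕ) - (j:ℕ)) := hb
              _ ≤ ((K + d) * n) * (d ^ d * n ^ (j:ℕ)) * n ^ ((l:ℕ) - (j:ℕ)) := by
                  apply Nat.mul_le_mul_right
                  apply Nat.mul_le_mul (hcall m (by omega))
                  rw [mul_pow]
                  exact Nat.mul_le_mul (Nat.pow_le_pow_right (by omega) (by omega))
                    (Nat.pow_le_pow_right (by omega) (by omega))
              _ = ((K + d) * d ^ d) * (n * (n ^ (j:ℕ) * n ^ ((l:ℕ) - (j:ℕ)))) := by ring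
              _ ≤ ((K + d) * d ^ d) * (n * n ^ (l:ℕ)) := by
                  apply Nat.mul_le_mul_left
                  apply Nat.mul_le_mul_left
                  rw [← pow_add]
                  exact Nat.pow_le_pow_right (by omega) (by omega)
              _ = ((K + d) * d ^ d) * n ^ ((l:ℕ) + 1) := by rw [pow_succ]; ring
      _ = ((j:ℕ) + 1) * (((K + d) * d ^ d) * n ^ ((l:ℕ) + 1)) := by
          rw [Finset.sum_const, Finset.card_range, smul_eq_mul]
      _ ≤ d * (((K + d) * d ^ d) * n ^ ((l:ℕ) + 1)) := by
          apply Nat.mul_le_mul_right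
          have := j.isLt; omega
      _ = (d * ((K + d) * d ^ d)) * n ^ ((l:ℕ) + 1) := by ring
  · -- Good
    rw [hu]
    have hg := good_sum (k := (j:ℕ)+1) (F := F)
      (cost := fun _ => 4 ^ d * (K + d + 1) * n) ?hcost
    case hcost =>
      intro m hm
      simp only [Finset.mem_range] at hm
      rw [hF]
      simp only [dif_pos (by omega : m ≤ (j:ℕ))]
      apply good_mono (wv_good n hn (c m) ⟨(j:ℕ) - m, hidx m (by omega)⟩ m)
      calc 4 ^ m * ((c m).natAbs + n)
          ≤ 4 ^ d * ((K + d) * n + n) := by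
            apply Nat.mul_le_mul
            · exact Nat.pow_le_pow_right (by norm_num) (by have := j.isLt; omega)
            · have := hcall m (by omega); omega
        _ = 4 ^ d * (K + d + 1) * n := by ring
    apply good_mono hg
    rw [Finset.sum_const, Finset.card_range, smul_eq_mul]
    calc ((j:ℕ) + 1) * (4 ^ d * (K + d + 1) * n)
        ≤ d * (4 ^ d * (K + d + 1) * n) := by
          apply Nat.mul_le_mul_right
          have := j.isLt; omega
      _ = (d * (4 ^ d * (K + d + 1))) * n := by ring

end Main
section Final
variable {d : ℕ}

theorem main_ind (d : ℕ) (m : ℕ) :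
    ∀ j K : ℕ, d ≤ j + m → ∃ C : ℕ, ∀ n : ℕ, 1 ≤ n → ∀ v : Fin d → ℤ, Supp d j v →
      (∀ l : Fin d, (v l).natAbs ≤ K * n ^ ((l : ℕ) + 1)) →
      Good d (inlv d v) (C * n) := by
  induction m with
  | zero =>
      intro j K hj
      refine ⟨0, fun n hn v hs _ => ?_⟩
      rw [supp_zero_of_ge (by omega) hs, inlv_zero]
      simpa using good_one
  | succ m ih =>
      intro j K hj
      by_cases hjd : d ≤ j + m
      · exact ih j K hjd
      · have hjlt : j < d := by omega
        obtain ⟨C', hC'⟩ := ih (j + 1) (K + d * ((K + d) * d ^ d)) (by omega)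
        refine ⟨d * (4 ^ d * (K + d + 1)) + C', fun n hn v hs hb => ?_⟩
        set jf : Fin d := ⟨j, hjlt⟩ with hjf
        obtain ⟨u, hu1, hu2, hu3, hu4⟩ := handle_coord n K hn jf v (by
          have := hb jf
          simpa using this)
        have hv : inlv d v = inlv d u * inlv d (v - u) := by
          rw [← inlv_add]
          congr 1
          ring
        rw [hv]
        have hs2 : Supp d (j + 1) (v - u) := by
          intro l hl
          by_cases hlj : (l : ℕ) < j
          · simp [hs l hlj, hu1 l hlj]
          · have hlf : l = jf := Fin.ext (by simp [hjf]; omega)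
            rw [hlf]
            simp [hu2]
        have hb2 : ∀ l : Fin d, ((v - u) l).natAbs
            ≤ (K + d * ((K + d) * d ^ d)) * n ^ ((l : ℕ) + 1) := by
          intro l
          have h1 : ((v - u) l).natAbs ≤ (v l).natAbs + (u l).natAbs := by
            simp only [Pi.sub_apply]
            exact Int.natAbs_sub_le _ _
          have h2 := hb l
          have h3 := hu3 l
          have h4 : (K + d * ((K + d) * d ^ d)) * n ^ ((l : ℕ) + 1)
              = K * n ^ ((l : ℕ) + 1) + (d * ((K + d) * d ^ d)) * n ^ ((l : ℕ) + 1) := by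
            ring
          omega
        have := good_mul hu4 (hC' n hn (v - u) hs2 hb2)
        apply good_mono this
        rw [add_mul]
end Final

theorem prod_aGen_eq (d : ℕ) (p : Fin d → ℤ) :
    (List.ofFn (fun i : Fin d => aGen d i ^ p i)).prod = inlv d p := by
  have h1 : (fun i : Fin d => aGen d i ^ p i)
      = (fun y => SemidirectProduct.inl (φ := act d) y) ∘
        (fun i : Fin d => (Multiplicative.ofAdd ((Pi.single i (1:ℤ)) : Fin d → ℤ)) ^ (p i)) := by
    funext i
    simp only [Function.comp_apply, aGen, ← map_zpow]
  rw [h1, ← List.map_ofFn]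
  rw [← MonoidHom.map_list_prod]
  rw [List.prod_ofFn]
  unfold inlv
  congr 1
  have h2 : ∀ i : Fin d, (Multiplicative.ofAdd ((Pi.single i (1:ℤ)) : Fin d → ℤ)) ^ (p i)
      = Multiplicative.ofAdd (p i • ((Pi.single i (1:ℤ)) : Fin d → ℤ)) := by
    intro i
    exact (ofAdd_zsmul (p i) ((Pi.single i (1:ℤ)) : Fin d → ℤ)).symm
  rw [Finset.prod_congr rfl (fun i _ => h2 i), ← ofAdd_sum]
  congr 1
  have h3 : ∀ i : Fin d, p i • ((Pi.single i (1:ℤ)) : Fin d → ℤ) = Pi.single i (p i) := by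
    intro i
    rw [← Pi.single_smul]
    simp
  rw [Finset.sum_congr rfl (fun i _ => h3 i)]
  exact Finset.univ_sum_single p

/-- Proposition 3.2: there is `C_d ≥ 1` such that any `g ∈ Γ_d` with normal form
`t^r a_1^{p_1} ⋯ a_d^{p_d}`, where `|r| ≤ n` and `|p_i| ≤ n^i` (0-indexed: `|p_i| ≤ n^{i+1}`),
satisfies `d(1,g) ≤ C_d n`. -/
theorem whole_ball (d : ℕ) (hd : 1 ≤ d) :
    ∃ C : ℕ, 1 ≤ C ∧ ∀ n : ℕ, 1 ≤ n → ∀ r : ℤ, ∀ p : Fin d → ℤ,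
      r.natAbs ≤ n → (∀ i : Fin d, (p i).natAbs ≤ n ^ ((i : ℕ) + 1)) →
      wl d (tGen d ^ r * (List.ofFn (fun i : Fin d => aGen d i ^ p i)).prod) ≤ C * n := by
  obtain ⟨C0, hC0⟩ := main_ind d d 0 1 (by omega)
  refine ⟨1 + C0, by omega, ?_⟩
  intro n hn r p hr hp
  rw [prod_aGen_eq]
  apply wl_le_of_good
  have h1 : Good d (tGen d ^ r) r.natAbs := good_tGen_zpow r
  have h2 : Good d (inlv d p) (C0 * n) := by
    apply hC0 n hn p (fun l hl => absurd hl (by omega))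
    intro l
    simpa using hp l
  have := good_mul h1 h2
  apply good_mono this
  calc r.natAbs + C0 * n ≤ n + C0 * n := by omega
    _ = (1 + C0) * n := by ring

end ModelFiliform
end

section
/- For every integer d ≥ 1 there is a constant D_d > 0 such that for all positive integers n and p with 0 < p ≤ n^d, one has d(1, a_d^p) ≤ D_d · n in Γ_d. -/
namespace ModelFiliform

/-! ### Auxiliary material -/

section Aux

open Multiplicative SemidirectProduct

/-- `u = 1 + N`, the underlying endomorphism of `φ`. -/
noncomputable def uu (d : ℕ) : Module.End ℤ (Fin d → ℤ) := 1 + shiftMap d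

/-- `ψ = u^n - 1 = φ^n - 1`. -/
noncomputable def psi (d n : ℕ) : Module.End ℤ (Fin d → ℤ) := uu d ^ n - 1

theorem phiAut_apply' (d : ℕ) (x : Fin d → ℤ) :
    phiAut d (Multiplicative.ofAdd x) = Multiplicative.ofAdd (uu d x) := by
  show Multiplicative.ofAdd ((phi d) x) = _
  unfold phi uu
  rw [LinearMap.GeneralLinearGroup.coeFn_generalLinearEquiv]
  show Multiplicative.ofAdd (((phiUnit d) : Module.End ℤ (Fin d → ℤ)) x) = _
  rw [phiUnit, IsUnit.unit_spec]

/-- The embedding of `ℤ^d` into `Γ_d`. -/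
noncomputable def iota (d : ℕ) (x : Fin d → ℤ) : Gamma d :=
  SemidirectProduct.inl (Multiplicative.ofAdd x)

theorem iota_mul (d : ℕ) (x y : Fin d → ℤ) :
    iota d (x + y) = iota d x * iota d y := by
  unfold iota; rw [ofAdd_add, map_mul]

theorem iota_inv (d : ℕ) (x : Fin d → ℤ) : (iota d x)⁻¹ = iota d (-x) := by
  unfold iota; rw [ofAdd_neg, map_inv]

theorem conj1 (d : ℕ) (x : Fin d → ℤ) :
    (tGen d)⁻¹ * iota d x * tGen d = iota d (uu d x) := by
  have h := SemidirectProduct.inl_aut (φ := act d) (Multiplicative.ofAdd (1:ℤ))⁻¹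
      (Multiplicative.ofAdd x)
  have hact : act d (Multiplicative.ofAdd (1:ℤ))⁻¹ (Multiplicative.ofAdd x)
      = Multiplicative.ofAdd (uu d x) := by
    rw [map_inv, act, zpowersHom_apply]
    simp only [toAdd_ofAdd, zpow_one, inv_inv]
    exact phiAut_apply' d x
  rw [hact] at h
  rw [iota, iota, h, tGen]
  simp [mul_assoc]

theorem conj_pow (d : ℕ) (k : ℕ) (x : Fin d → ℤ) :
    ((tGen d)⁻¹)^k * iota d x * (tGen d)^k = iota d ((uu d ^ k) x) := by
  induction k generalizing x with
  | zero => simp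
  | succ k ih =>
      have h1 : ((tGen d)⁻¹)^(k+1) = ((tGen d)⁻¹)^k * (tGen d)⁻¹ := pow_succ _ _
      have h2 : (tGen d)^(k+1) = tGen d * (tGen d)^k := pow_succ' _ _
      rw [h1, h2]
      have : ((tGen d)⁻¹)^k * (tGen d)⁻¹ * iota d x * (tGen d * (tGen d)^k)
          = ((tGen d)⁻¹)^k * ((tGen d)⁻¹ * iota d x * tGen d) * (tGen d)^k := by
        group
      rw [this, conj1, ih]
      have he : (uu d ^ (k+1)) x = (uu d ^ k) ((uu d) x) := by rw [pow_succ]; rfl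
      rw [he]

theorem comm_eq (d n : ℕ) (x : Fin d → ℤ) :
    iota d (psi d n x) =
      ((tGen d)⁻¹)^n * iota d x * (tGen d)^n * (iota d x)⁻¹ := by
  rw [conj_pow, iota_inv, ← iota_mul]
  have : (psi d n) x = (uu d ^ n) x + -x := by
    simp [psi, LinearMap.sub_apply, sub_eq_add_neg]
  rw [this]

/-! ### Word-length machinery -/

/-- `g` is a product of at most `m` generators or their inverses. -/
noncomputable def HasLe (d : ℕ) (g : Gamma d) (m : ℕ) : Prop :=
  ∃ l : List (Gamma d), l.length ≤ m ∧ (∀ x ∈ l, x ∈ gens d ∨ x⁻¹ ∈ gens d) ∧ l.prod = g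

theorem wl_le_s7 (d : ℕ) {g : Gamma d} {m : ℕ} (h : HasLe d g m) : wl d g ≤ m := by
  obtain ⟨l, hlen, hmem, hprod⟩ := h
  refine le_trans (Nat.sInf_le ⟨l, rfl, hmem, hprod⟩) hlen

theorem HasLe.mono (d : ℕ) {g : Gamma d} {m m' : ℕ} (h : HasLe d g m) (hm : m ≤ m') :
    HasLe d g m' := by
  obtain ⟨l, hlen, hmem, hprod⟩ := h
  exact ⟨l, le_trans hlen hm, hmem, hprod⟩

theorem HasLe.mul (d : ℕ) {g h : Gamma d} {m k : ℕ}
    (hg : HasLe d g m) (hh : HasLe d h k) : HasLe d (g * h) (m + k) := by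
  obtain ⟨l1, h1, m1, p1⟩ := hg
  obtain ⟨l2, h2, m2, p2⟩ := hh
  refine ⟨l1 ++ l2, ?_, ?_, ?_⟩
  · rw [List.length_append]; omega
  · intro x hx
    rcases List.mem_append.1 hx with h | h
    · exact m1 x h
    · exact m2 x h
  · rw [List.prod_append, p1, p2]

theorem HasLe.inv (d : ℕ) {g : Gamma d} {m : ℕ} (hg : HasLe d g m) : HasLe d g⁻¹ m := by
  obtain ⟨l, h1, m1, p1⟩ := hg
  refine ⟨(l.map fun x => x⁻¹).reverse, ?_, ?_, ?_⟩
  · rw [List.length_reverse, List.length_map]; exact h1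
  · intro x hx
    rw [List.mem_reverse, List.mem_map] at hx
    obtain ⟨y, hy, rfl⟩ := hx
    rcases m1 y hy with h | h
    · right; rwa [inv_inv]
    · left; exact h
  · rw [← List.prod_inv_reverse, p1]

theorem hasLe_pow (d : ℕ) {g : Gamma d} (hg : g ∈ gens d) (m : ℕ) :
    HasLe d (g ^ m) m := by
  refine ⟨List.replicate m g, by simp, ?_, List.prod_replicate m g⟩
  intro x hx
  rw [List.eq_of_mem_replicate hx]
  exact Or.inl hg

theorem tGen_mem (d : ℕ) : tGen d ∈ gens d := Set.mem_insert _ _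

theorem aGen_mem (d : ℕ) (i : Fin d) : aGen d i ∈ gens d :=
  Set.mem_insert_of_mem _ ⟨i, rfl⟩

theorem hasLe_psi (d n : ℕ) {x : Fin d → ℤ} {L : ℕ} (h : HasLe d (iota d x) L) :
    HasLe d (iota d (psi d n x)) (2 * L + 2 * n) := by
  rw [comm_eq d n x]
  have ht : HasLe d ((tGen d)^n) n := hasLe_pow d (tGen_mem d) n
  have ht' : HasLe d (((tGen d)⁻¹)^n) n := by
    rw [inv_pow]; exact HasLe.inv d ht
  have := HasLe.mul d (HasLe.mul d (HasLe.mul d ht' h) ht) (HasLe.inv d h)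
  exact HasLe.mono d this (by omega)

theorem hasLe_psi_pow (d n : ℕ) {x : Fin d → ℤ} {L : ℕ} (h : HasLe d (iota d x) L) :
    ∀ j, HasLe d (iota d ((psi d n ^ j) x)) (2 ^ j * (L + 2 * n) - 2 * n) := by
  intro j
  induction j with
  | zero =>
      simp only [pow_zero, one_mul, Module.End.one_apply, Nat.add_sub_cancel]
      exact h
  | succ j ih =>
      have hstep := hasLe_psi d n ih
      have heq : (psi d n ^ (j+1)) x = psi d n ((psi d n ^ j) x) := by
        rw [pow_succ']; rfl
      rw [heq]
      refine HasLe.mono d hstep ?_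
      have h1 : (1:ℕ) ≤ 2 ^ j := Nat.one_le_two_pow
      have h2 : 2 * n ≤ 2 ^ j * (L + 2 * n) := by
        calc 2 * n ≤ L + 2 * n := by omega
        _ ≤ 2 ^ j * (L + 2 * n) := Nat.le_mul_of_pos_left _ (by omega)
      have h3 : (2:ℕ) ^ (j+1) * (L + 2 * n) = 2 * (2 ^ j * (L + 2 * n)) := by
        rw [pow_succ]; ring
      rw [h3]
      omega

/-! ### Linear algebra: powers of `ψ` on basis vectors -/

theorem uu_pow_apply (d n : ℕ) (x : Fin d → ℤ) (l : Fin d) :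
    ((uu d ^ n) x) l
      = ∑ k ∈ Finset.range (n+1), (n.choose k : ℤ) * (((shiftMap d ^ k) x) l) := by
  have hc : Commute (shiftMap d) (1 : Module.End ℤ (Fin d → ℤ)) := Commute.one_right _
  have h : uu d ^ n
      = ∑ k ∈ Finset.range (n+1), (n.choose k : ℕ) • (shiftMap d ^ k) := by
    rw [uu, add_comm, hc.add_pow]
    refine Finset.sum_congr rfl fun k _ => ?_
    rw [one_pow, mul_one, ← (Nat.cast_commute (n.choose k)
      ((shiftMap d : Module.End ℤ (Fin d → ℤ)) ^ k)).eq, ← nsmul_eq_mul]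
  rw [h]
  rw [LinearMap.coe_sum, Finset.sum_apply, Finset.sum_apply]
  refine Finset.sum_congr rfl fun k _ => ?_
  rw [LinearMap.smul_apply, Pi.smul_apply, nsmul_eq_mul]

theorem psi_apply' (d n : ℕ) (x : Fin d → ℤ) (l : Fin d) :
    (psi d n x) l
      = ∑ k ∈ Finset.Icc 1 n, (n.choose k : ℤ) * (((shiftMap d ^ k) x) l) := by
  have h0 : (psi d n x) l = ((uu d ^ n) x) l - x l := by
    simp [psi, LinearMap.sub_apply]
  have hins : Finset.range (n+1) = insert 0 (Finset.Icc 1 n) := by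
    ext k; simp; omega
  rw [h0, uu_pow_apply, hins, Finset.sum_insert (by simp)]
  simp

theorem psi_support (d n : ℕ) (x : Fin d → ℤ) (s : ℕ)
    (hx : ∀ i : Fin d, (i : ℕ) < s → x i = 0) :
    ∀ l : Fin d, (l : ℕ) < s + 1 → (psi d n x) l = 0 := by
  intro l hl
  rw [psi_apply']
  refine Finset.sum_eq_zero fun k hk => ?_
  rw [Finset.mem_Icc] at hk
  rw [shiftMap_pow_apply]
  by_cases h : k ≤ (l : ℕ)
  · rw [dif_pos h]
    have hz : x ⟨(l : ℕ) - k, lt_of_le_of_lt (Nat.sub_le _ _) l.isLt⟩ = 0 :=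
      hx _ (show (l : ℕ) - k < s by omega)
    rw [hz, mul_zero]
  · rw [dif_neg h, mul_zero]

theorem psi_pow_support (d n : ℕ) :
    ∀ (j : ℕ) (x : Fin d → ℤ) (s : ℕ), (∀ i : Fin d, (i : ℕ) < s → x i = 0) →
      ∀ l : Fin d, (l : ℕ) < s + j → ((psi d n ^ j) x) l = 0 := by
  intro j
  induction j with
  | zero => intro x s hx l hl; simpa using hx l (by omega)
  | succ j ih =>
      intro x s hx l hl
      have he : (psi d n ^ (j+1)) x = (psi d n ^ j) (psi d n x) := by
        rw [pow_succ]; rfl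
      rw [he]
      exact ih (psi d n x) (s+1) (psi_support d n x s hx) l (by omega)

theorem single_support (d : ℕ) (m : ℤ) (i : Fin d) :
    ∀ i' : Fin d, (i' : ℕ) < (i : ℕ) → (m • (Pi.single i 1 : Fin d → ℤ)) i' = 0 := by
  intro i' hi'
  have : i' ≠ i := by intro h; rw [h] at hi'; omega
  rw [Pi.smul_apply, Pi.single_eq_of_ne this 1, smul_zero]

theorem psi_single_eq (d n : ℕ) (hn : 0 < n) (m : ℤ) (i : Fin d)
    (hi : (i : ℕ) + 1 < d) (l : Fin d) (hl : (l : ℕ) = (i : ℕ) + 1) :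
    (psi d n (m • Pi.single i (1:ℤ))) l = (n : ℤ) * m := by
  rw [psi_apply']
  rw [Finset.sum_eq_single 1]
  · rw [shiftMap_pow_apply, dif_pos (by omega : 1 ≤ (l : ℕ))]
    have : (⟨(l : ℕ) - 1, lt_of_le_of_lt (Nat.sub_le _ _) l.isLt⟩ : Fin d) = i := by
      apply Fin.ext; simp; omega
    rw [this]
    simp
  · intro k hk hk1
    rw [Finset.mem_Icc] at hk
    rw [shiftMap_pow_apply]
    by_cases h : k ≤ (l : ℕ)
    · rw [dif_pos h]
      have : (⟨(l : ℕ) - k, lt_of_le_of_lt (Nat.sub_le _ _) l.isLt⟩ : Fin d) ≠ i := by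
        intro hcon
        have := congrArg Fin.val hcon
        simp at this
        omega
      rw [Pi.smul_apply, Pi.single_eq_of_ne this 1]
      simp
    · rw [dif_neg h, mul_zero]
  · intro h
    exfalso
    exact h (Finset.mem_Icc.2 ⟨le_refl 1, hn⟩)

theorem psi_pow_single (d n : ℕ) (hn : 0 < n) :
    ∀ (j : ℕ) (hj : j + 1 ≤ d) (m : ℤ),
      ((psi d n) ^ j) (m • Pi.single (⟨d - 1 - j, by omega⟩ : Fin d) (1:ℤ))
        = (m * (n : ℤ) ^ j) • Pi.single (⟨d - 1, by omega⟩ : Fin d) (1:ℤ) := by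
  intro j
  induction j with
  | zero =>
      intro hj m
      simp
  | succ j ih =>
      intro hj m
      have hd : j + 2 ≤ d := hj
      set i : Fin d := ⟨d - 1 - (j+1), by omega⟩ with hidef
      have hival : (i : ℕ) = d - 2 - j := by simp [hidef]; omega
      have hi1 : (i : ℕ) + 1 < d := by omega
      set i1 : Fin d := ⟨(i : ℕ) + 1, hi1⟩ with hi1def
      have he : ((psi d n) ^ (j+1)) (m • Pi.single i (1:ℤ))
          = ((psi d n) ^ j) (psi d n (m • Pi.single i (1:ℤ))) := by
        rw [pow_succ]; rfl
      set y : Fin d → ℤ :=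
        psi d n (m • Pi.single i (1:ℤ)) - ((n : ℤ) * m) • Pi.single i1 (1:ℤ) with hy
      have hsplit : psi d n (m • Pi.single i (1:ℤ))
          = ((n : ℤ) * m) • Pi.single i1 (1:ℤ) + y := by rw [hy]; ring
      have hysupp : ∀ i' : Fin d, (i' : ℕ) < (i : ℕ) + 2 → y i' = 0 := by
        intro i' hi'
        rw [hy]
        by_cases hcase : (i' : ℕ) = (i : ℕ) + 1
        · have h1 : (psi d n (m • Pi.single i (1:ℤ))) i' = (n : ℤ) * m :=
            psi_single_eq d n hn m i hi1 i' hcase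
          have h2 : i' = i1 := by apply Fin.ext; simpa using hcase
          rw [Pi.sub_apply, h1, h2, Pi.smul_apply, Pi.single_eq_same, smul_eq_mul,
            mul_one, sub_self]
        · have h1 : (psi d n (m • Pi.single i (1:ℤ))) i' = 0 :=
            psi_support d n _ (i : ℕ) (single_support d m i) i' (by omega)
          have h2 : i' ≠ i1 := by
            intro hcon; exact hcase (by rw [hcon])
          rw [Pi.sub_apply, h1, Pi.smul_apply, Pi.single_eq_of_ne h2 1, smul_zero,
            sub_zero]
      have hyzero : ((psi d n) ^ j) y = 0 := by
        funext l
        have := psi_pow_support d n j y ((i : ℕ) + 2) hysupp l (by omega)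
        simpa using this
      rw [he, hsplit, map_add, hyzero, add_zero]
      have hi1eq : i1 = (⟨d - 1 - j, by omega⟩ : Fin d) := by
        apply Fin.ext; simp [hi1def]; omega
      rw [hi1eq, ih (by omega) ((n : ℤ) * m)]
      congr 1
      ring

/-! ### Assembly -/

theorem aGen_pow_eq (d : ℕ) (i : Fin d) (m : ℕ) :
    aGen d i ^ m = iota d ((m : ℤ) • Pi.single i (1:ℤ)) := by
  induction m with
  | zero => simp [iota]
  | succ m ih =>
      rw [pow_succ, ih]
      have h : ((m + 1 : ℕ) : ℤ) • (Pi.single i 1 : Fin d → ℤ)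
          = (m : ℤ) • (Pi.single i 1 : Fin d → ℤ) + (Pi.single i 1 : Fin d → ℤ) := by
        push_cast
        rw [add_smul, one_smul]
      rw [h, iota_mul]
      rfl

theorem hasLe_aGen_pow (d : ℕ) (i : Fin d) (m : ℕ) :
    HasLe d (iota d ((m : ℤ) • Pi.single i (1:ℤ))) m := by
  rw [← aGen_pow_eq]
  exact hasLe_pow d (aGen_mem d i) m

theorem key_hasLe (d n : ℕ) (hn : 0 < n) (j : ℕ) (hj : j + 1 ≤ d) (m : ℕ) (hm : m ≤ n) :
    HasLe d (iota d (((m * n ^ j : ℕ) : ℤ) • Pi.single (⟨d - 1, by omega⟩ : Fin d) (1:ℤ)))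
      (2 ^ j * (3 * n)) := by
  have hc : ((m * n ^ j : ℕ) : ℤ) = (m : ℤ) * (n : ℤ) ^ j := by push_cast; ring
  rw [hc, ← psi_pow_single d n hn j hj (m : ℤ)]
  have h0 : HasLe d (iota d ((m : ℤ) • Pi.single (⟨d - 1 - j, by omega⟩ : Fin d) (1:ℤ))) m :=
    hasLe_aGen_pow d _ m
  refine HasLe.mono d (hasLe_psi_pow d n h0 j) ?_
  have h1 : 2 ^ j * (m + 2 * n) ≤ 2 ^ j * (3 * n) := Nat.mul_le_mul_left _ (by omega)
  omega

theorem digits_hasLe (d n : ℕ) (hn : 0 < n) :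
    ∀ j (hjd : j + 1 ≤ d), ∀ p : ℕ, p ≤ n ^ (j + 1) →
      HasLe d (iota d ((p : ℤ) • Pi.single (⟨d - 1, by omega⟩ : Fin d) (1:ℤ)))
        (2 ^ (j + 2) * (3 * n)) := by
  intro j
  induction j with
  | zero =>
      intro hj p hp
      refine HasLe.mono d (hasLe_aGen_pow d _ p) ?_
      have hpn : p ≤ n := by simpa using hp
      have h4 : (2:ℕ) ^ (0 + 2) = 4 := rfl
      rw [h4]
      omega
  | succ j ih =>
      intro hj p hp
      have hq : p / n ^ (j+1) ≤ n := by
        have h1 : p ≤ n ^ (j+1) * n := by rw [← pow_succ]; exact hp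
        have h2 := Nat.div_le_div_right (c := n ^ (j+1)) h1
        rwa [Nat.mul_div_cancel_left _ (pow_pos hn _)] at h2
      have hr : p % n ^ (j+1) ≤ n ^ (j+1) := le_of_lt (Nat.mod_lt _ (pow_pos hn _))
      have hpqr : p = (p / n ^ (j+1)) * n ^ (j+1) + p % n ^ (j+1) := by
        rw [mul_comm]
        exact (Nat.div_add_mod p (n ^ (j+1))).symm
      have hsplit : ((p : ℤ)) • (Pi.single (⟨d - 1, by omega⟩ : Fin d) 1 : Fin d → ℤ)
          = (((p / n ^ (j+1)) * n ^ (j+1) : ℕ) : ℤ)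
              • (Pi.single (⟨d - 1, by omega⟩ : Fin d) 1 : Fin d → ℤ)
            + ((p % n ^ (j+1) : ℕ) : ℤ)
              • (Pi.single (⟨d - 1, by omega⟩ : Fin d) 1 : Fin d → ℤ) := by
        rw [← add_smul]
        congr 1
        rw [← Nat.cast_add, ← hpqr]
      rw [hsplit, iota_mul]
      have h1 := key_hasLe d n hn (j+1) hj (p / n ^ (j+1)) hq
      have h2 := ih (by omega) (p % n ^ (j+1)) hr
      refine HasLe.mono d (HasLe.mul d h1 h2) ?_
      have e1 : (2:ℕ) ^ (j+2) * (3 * n) = 2 * (2 ^ (j+1) * (3 * n)) := by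
        rw [pow_succ]; ring
      have e2 : (2:ℕ) ^ (j+1+2) * (3 * n) = 4 * (2 ^ (j+1) * (3 * n)) := by
        rw [pow_succ, pow_succ]; ring
      rw [e1, e2]
      omega

end Aux

/-- Lemma 3.3: there is `D_d > 0` such that `d(1, a_d^p) ≤ D_d n` whenever `0 < p ≤ n^d`. -/
theorem central_power_short (d : ℕ) (hd : 1 ≤ d) :
    ∃ D : ℕ, 0 < D ∧ ∀ n p : ℕ, 0 < n → 0 < p → p ≤ n ^ d →
      wl d (aGen d ⟨d - 1, by omega⟩ ^ p) ≤ D * n := by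
  refine ⟨2 ^ (d + 2) * 3, by positivity, ?_⟩
  intro n p hn hp hpn
  have hj : (d - 1) + 1 ≤ d := by omega
  have hp' : p ≤ n ^ ((d - 1) + 1) := by
    rwa [show d - 1 + 1 = d by omega]
  have h := digits_hasLe d n hn (d - 1) hj p hp'
  have ha : aGen d ⟨d - 1, by omega⟩ ^ p
      = iota d ((p : ℤ) • Pi.single (⟨d - 1, by omega⟩ : Fin d) (1:ℤ)) :=
    aGen_pow_eq d _ p
  rw [ha]
  refine wl_le_s7 d (HasLe.mono d h ?_)
  have h1 : (2:ℕ) ^ (d - 1 + 2) ≤ 2 ^ (d + 2) := Nat.pow_le_pow_right (by omega) (by omega)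
  calc 2 ^ (d - 1 + 2) * (3 * n) ≤ 2 ^ (d + 2) * (3 * n) := Nat.mul_le_mul_right _ h1
    _ = 2 ^ (d + 2) * 3 * n := by ring

end ModelFiliform
end

section
/- Let d ≥ 1 and let γ ∈ Γ_d with γ ∉ A_d. Suppose γ = γ_0^p a_d^q where p > 0 is maximal, i.e. p is the largest positive integer such that γ = h^m a_d^k has a solution with m = p, h ∈ Γ_d, k ∈ ℤ. Then the centralizer C(γ) of γ in Γ_d equals the subgroup generated by γ_0 and a_d, and this subgroup is free abelian of rank 2. -/
namespace ModelFiliform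

noncomputable def chain (d : ℕ) : (Module.End ℤ (Fin d → ℤ))ˣ →* MulAut (Multiplicative (Fin d → ℤ)) where
  toFun U := AddEquiv.toMultiplicative (LinearMap.GeneralLinearGroup.generalLinearEquiv ℤ _ U).toAddEquiv
  map_one' := by ext x; rfl
  map_mul' U V := by ext x; rfl

theorem chain_apply (d : ℕ) (U : (Module.End ℤ (Fin d → ℤ))ˣ) (a : Multiplicative (Fin d → ℤ)) :
    chain d U a = Multiplicative.ofAdd ((U : Module.End ℤ (Fin d → ℤ)) (Multiplicative.toAdd a)) := rfl

theorem phiAut_eq (d : ℕ) : phiAut d = chain d (phiUnit d) := rfl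

theorem act_apply (d : ℕ) (u : Multiplicative ℤ) (a : Multiplicative (Fin d → ℤ)) :
    act d u a = Multiplicative.ofAdd
      (((phiUnit d ^ (-Multiplicative.toAdd u) : (Module.End ℤ (Fin d → ℤ))ˣ) : Module.End ℤ (Fin d → ℤ))
        (Multiplicative.toAdd a)) := by
  have : act d u = chain d (phiUnit d ^ (-Multiplicative.toAdd u)) := by
    show (phiAut d)⁻¹ ^ (Multiplicative.toAdd u) = _
    rw [phiAut_eq, ← map_inv, ← map_zpow, inv_zpow, ← zpow_neg]
  rw [this, chain_apply]
theorem core_fixed (d n : ℕ) (hn : 0 < n) (y : Fin d → ℤ)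
    (hy : ((1 + shiftMap d) ^ n) y = y) : shiftMap d y = 0 := by
  obtain ⟨n, rfl⟩ : ∃ m, n = m + 1 := ⟨n - 1, by omega⟩
  have hexp : ((1 + shiftMap d) ^ (n+1)) =
      ∑ m ∈ Finset.range (n + 2), shiftMap d ^ (n + 1 - m) * ((n+1).choose m : Module.End ℤ (Fin d → ℤ)) := by
    rw [(Commute.one_left (shiftMap d)).add_pow]
    congr 1; funext m; rw [one_pow, one_mul]
  -- main claim: y j = 0 for j + 1 < d
  have key : ∀ j : ℕ, (hj : j + 1 < d) → y ⟨j, by omega⟩ = 0 := by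
    intro j
    induction j using Nat.strong_induction_on with
    | _ j ih =>
      intro hj
      have hJ : (⟨j + 1, hj⟩ : Fin d) = ⟨j+1, hj⟩ := rfl
      have h1 := congrFun hy ⟨j+1, hj⟩
      rw [hexp] at h1
      -- evaluate the sum
      have hsum : (∑ m ∈ Finset.range (n + 2),
          shiftMap d ^ (n + 1 - m) * ((n+1).choose m : Module.End ℤ (Fin d → ℤ))) y ⟨j+1, hj⟩
          = ∑ m ∈ Finset.range (n + 2),
            ((n+1).choose m : ℤ) * ((shiftMap d ^ (n + 1 - m)) y ⟨j+1, hj⟩) := by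
        rw [LinearMap.sum_apply]
        rw [Finset.sum_apply]
        congr 1; funext m
        rw [Module.End.mul_apply]
        have : ((((n+1).choose m : Module.End ℤ (Fin d → ℤ))) y) = ((n+1).choose m : ℤ) • y := by
          simp [Module.End.natCast_apply]
        rw [this, map_smul]
        simp [mul_comm]
      rw [hsum] at h1
      -- split off the last two terms
      rw [Finset.sum_range_succ, Finset.sum_range_succ] at h1
      have hz : ∀ m ∈ Finset.range n,
          ((n+1).choose m : ℤ) * ((shiftMap d ^ (n + 1 - m)) y ⟨j+1, hj⟩) = 0 := by
        intro m hm
        rw [Finset.mem_range] at hm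
        rw [shiftMap_pow_apply]
        by_cases hc : n + 1 - m ≤ j + 1
        · rw [dif_pos hc]
          have hidx : j + 1 - (n + 1 - m) < j := by omega
          rw [ih _ hidx (by omega)]
          ring
        · rw [dif_neg hc]; ring
      rw [Finset.sum_eq_zero hz, zero_add] at h1
      -- now h1 : choose (n+1) n * (L^1 y)_{j+1} + choose (n+1) (n+1) * (L^0 y)_{j+1} = y_{j+1}
      rw [shiftMap_pow_apply, shiftMap_pow_apply] at h1
      simp only [Nat.add_sub_cancel_left, Nat.sub_self, Nat.choose_succ_self_right, Nat.choose_self] at h1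
      rw [dif_pos (by omega : 1 ≤ j + 1), dif_pos (by omega : 0 ≤ j + 1)] at h1
      simp only [Nat.add_sub_cancel, Nat.sub_zero, Nat.cast_one, one_mul] at h1
      have : ((n:ℤ)+1) * y ⟨j, by omega⟩ = 0 := by push_cast at h1 ⊢; linarith
      have hn1 : ((n:ℤ)+1) ≠ 0 := by positivity
      exact (mul_eq_zero.mp this).resolve_left hn1
  funext j
  rw [shiftMap_apply]
  by_cases h : 1 ≤ (j : ℕ)
  · rw [dif_pos h]
    exact key _ (by omega)
  · rw [dif_neg h]; rfl

theorem unit_coe (d : ℕ) (n : ℕ) :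
    ((phiUnit d ^ (n:ℤ) : (Module.End ℤ (Fin d → ℤ))ˣ) : Module.End ℤ (Fin d → ℤ))
      = (1 + shiftMap d) ^ n := by
  have hspec : ((phiUnit d : (Module.End ℤ (Fin d → ℤ))ˣ) : Module.End ℤ (Fin d → ℤ))
      = 1 + shiftMap d := (shiftMap_nilpotent d).isUnit_one_add.unit_spec
  rw [zpow_natCast, Units.val_pow_eq_pow_val, hspec]

theorem fixed_of_zpow (d : ℕ) (v : ℤ) (hv : v ≠ 0) (y : Fin d → ℤ)
    (hy : ((phiUnit d ^ v : (Module.End ℤ (Fin d → ℤ))ˣ) : Module.End ℤ (Fin d → ℤ)) y = y) :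
    shiftMap d y = 0 := by
  rcases lt_or_gt_of_ne hv with h | h
  · have h2 : ((phiUnit d ^ (-v) : (Module.End ℤ (Fin d → ℤ))ˣ) : Module.End ℤ (Fin d → ℤ)) y = y := by
      have h3 : ((phiUnit d ^ (-v) : (Module.End ℤ (Fin d → ℤ))ˣ) : Module.End ℤ (Fin d → ℤ))
          (((phiUnit d ^ v : (Module.End ℤ (Fin d → ℤ))ˣ) : Module.End ℤ (Fin d → ℤ)) y) = y := by
        rw [← Module.End.mul_apply, ← Units.val_mul, ← zpow_add, neg_add_cancel, zpow_zero,
          Units.val_one, Module.End.one_apply]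
      rw [hy] at h3
      exact h3
    have hnat : -v = ((-v).toNat : ℤ) := by omega
    rw [hnat, unit_coe] at h2
    exact core_fixed d _ (by omega) y h2
  · have hnat : v = (v.toNat : ℤ) := by omega
    rw [hnat, unit_coe] at hy
    exact core_fixed d _ (by omega) y hy

theorem eq_single_of_shift_eq_zero (d : ℕ) (hd : 1 ≤ d) (y : Fin d → ℤ)
    (hy : shiftMap d y = 0) : y = (y ⟨d-1, by omega⟩) • Pi.single (⟨d-1, by omega⟩ : Fin d) (1:ℤ) := by
  funext j
  by_cases h : (j : ℕ) = d - 1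
  · have : j = ⟨d-1, by omega⟩ := Fin.ext h
    rw [this]
    simp
  · have hj1 : (j:ℕ) + 1 < d := by have := j.isLt; omega
    have := congrFun hy ⟨(j:ℕ)+1, hj1⟩
    rw [shiftMap_apply, dif_pos (by omega : 1 ≤ (j:ℕ)+1)] at this
    simp only [Nat.add_sub_cancel] at this
    have hje : (⟨(j:ℕ), _⟩ : Fin d) = j := Fin.ext rfl
    rw [hje] at this
    rw [this]
    rw [Pi.smul_apply, Pi.single_eq_of_ne (by exact fun hc => h (by simpa using congrArg Fin.val hc)), smul_zero]
    rfl

theorem shiftMap_single_last (d : ℕ) (hd : 1 ≤ d) (c : ℤ) :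
    shiftMap d (Pi.single (⟨d-1, by omega⟩ : Fin d) c) = 0 := by
  funext j
  rw [shiftMap_apply]
  by_cases h : 1 ≤ (j : ℕ)
  · rw [dif_pos h, Pi.zero_apply]
    apply Pi.single_eq_of_ne
    intro hc
    have := congrArg Fin.val hc
    simp only at this
    have := j.isLt
    omega
  · rw [dif_neg h]; rfl

theorem unit_zpow_fixed (d : ℕ) (v : ℤ) (y : Fin d → ℤ) (hy : shiftMap d y = 0) :
    ((phiUnit d ^ v : (Module.End ℤ (Fin d → ℤ))ˣ) : Module.End ℤ (Fin d → ℤ)) y = y := by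
  have hn : ∀ n : ℕ, ((1 + shiftMap d) ^ n) y = y := by
    intro n
    induction n with
    | zero => simp
    | succ n ih =>
        rw [pow_succ', Module.End.mul_apply]
        have : (1 + shiftMap d) y = y := by
          rw [LinearMap.add_apply, Module.End.one_apply, hy, add_zero]
        rw [ih, this]
  rcases le_or_gt 0 v with h | h
  · have hv : v = (v.toNat : ℤ) := by omega
    rw [hv, unit_coe]; exact hn _
  · have h1 : ((phiUnit d ^ (-v) : (Module.End ℤ (Fin d → ℤ))ˣ) : Module.End ℤ (Fin d → ℤ)) y = y := by
      have hv : -v = ((-v).toNat : ℤ) := by omega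
      rw [hv, unit_coe]; exact hn _
    have h3 : ((phiUnit d ^ v : (Module.End ℤ (Fin d → ℤ))ˣ) : Module.End ℤ (Fin d → ℤ))
        (((phiUnit d ^ (-v) : (Module.End ℤ (Fin d → ℤ))ˣ) : Module.End ℤ (Fin d → ℤ)) y) = y := by
      rw [← Module.End.mul_apply, ← Units.val_mul, ← zpow_add, add_neg_cancel, zpow_zero,
        Units.val_one, Module.End.one_apply]
    rw [h1] at h3
    exact h3

theorem act_fixes_last (d : ℕ) (hd : 1 ≤ d) (u : Multiplicative ℤ) (c : ℤ) :
    act d u (Multiplicative.ofAdd (Pi.single (⟨d-1, by omega⟩ : Fin d) c)) =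
      Multiplicative.ofAdd (Pi.single (⟨d-1, by omega⟩ : Fin d) c) := by
  rw [act_apply]
  congr 1
  simp only [toAdd_ofAdd]
  exact unit_zpow_fixed d _ _ (shiftMap_single_last d hd c)

theorem ad_central (d : ℕ) (hd : 1 ≤ d) (g : Gamma d) :
    Commute (aGen d ⟨d-1, by omega⟩) g := by
  unfold Commute SemiconjBy
  apply SemidirectProduct.ext
  · rw [SemidirectProduct.mul_left, SemidirectProduct.mul_left]
    rw [aGen, SemidirectProduct.left_inl, SemidirectProduct.right_inl, map_one]
    rw [MulAut.one_apply, act_fixes_last d hd]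
    exact mul_comm _ _
  · rw [SemidirectProduct.mul_right, SemidirectProduct.mul_right]
    exact mul_comm _ _

theorem inl_mem_A (d : ℕ) (y : Fin d → ℤ) :
    SemidirectProduct.inl (φ := act d) (Multiplicative.ofAdd y) ∈ A d := by
  let S : AddSubgroup (Fin d → ℤ) :=
    { carrier := {x | SemidirectProduct.inl (φ := act d) (Multiplicative.ofAdd x) ∈ A d}
      zero_mem' := by simp only [Set.mem_setOf_eq, ofAdd_zero, map_one]; exact one_mem _
      add_mem' := by
        intro a b ha hb
        simp only [Set.mem_setOf_eq, ofAdd_add, map_mul] at *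
        exact mul_mem ha hb
      neg_mem' := by
        intro a ha
        simp only [Set.mem_setOf_eq, ofAdd_neg, map_inv] at *
        exact inv_mem ha }
  have hy : y ∈ S := by
    have : y = ∑ i : Fin d, Pi.single i (y i) := (Finset.univ_sum_single y).symm
    rw [this]
    apply sum_mem
    intro i _
    have h1 : Pi.single i (y i) = (y i) • (Pi.single i 1 : Fin d → ℤ) := by
      funext j
      by_cases hji : j = i
      · subst hji; simp
      · simp [hji]
    rw [h1]
    apply AddSubgroup.zsmul_mem
    show SemidirectProduct.inl (φ := act d) (Multiplicative.ofAdd (Pi.single i (1:ℤ))) ∈ A d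
    exact Subgroup.subset_closure ⟨i, rfl⟩
  exact hy
noncomputable def pairHom {G : Type*} [Group G] (x y : G) (hcomm : Commute x y) :
    Multiplicative (ℤ × ℤ) →* G := MonoidHom.mk'
  (fun m => x ^ (Multiplicative.toAdd m).1 * y ^ (Multiplicative.toAdd m).2)
  (by
    intro a b
    show x ^ ((Multiplicative.toAdd a).1 + (Multiplicative.toAdd b).1) *
        y ^ ((Multiplicative.toAdd a).2 + (Multiplicative.toAdd b).2) = _
    rw [zpow_add, zpow_add,
      (hcomm.symm.zpow_zpow (Multiplicative.toAdd a).2 (Multiplicative.toAdd b).1).mul_mul_mul_comm])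

theorem pairHom_apply {G : Type*} [Group G] (x y : G) (hcomm : Commute x y)
    (m : Multiplicative (ℤ × ℤ)) :
    pairHom x y hcomm m = x ^ (Multiplicative.toAdd m).1 * y ^ (Multiplicative.toAdd m).2 := rfl

theorem free_rank_two {G : Type*} [Group G] (x y : G) (hcomm : Commute x y)
    (hzero : ∀ n c : ℤ, x ^ n * y ^ c = 1 → n = 0 ∧ c = 0) :
    Nonempty ((Subgroup.closure {x, y} : Subgroup G) ≃* Multiplicative (ℤ × ℤ)) := by
  have hx : x ∈ Subgroup.closure ({x, y} : Set G) :=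
    Subgroup.subset_closure (Set.mem_insert _ _)
  have hy : y ∈ Subgroup.closure ({x, y} : Set G) :=
    Subgroup.subset_closure (Set.mem_insert_of_mem _ rfl)
  have hinj : Function.Injective (pairHom x y hcomm) := by
    rw [injective_iff_map_eq_one]
    intro a ha
    rw [pairHom_apply] at ha
    obtain ⟨h1, h2⟩ := hzero _ _ ha
    have h3 : Multiplicative.toAdd a = 0 := Prod.ext h1 h2
    have h4 := congrArg Multiplicative.ofAdd h3
    simpa using h4
  have hr : (pairHom x y hcomm).range = Subgroup.closure ({x, y} : Set G) := by
    apply le_antisymm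
    · rintro g ⟨m, rfl⟩
      rw [pairHom_apply]
      exact mul_mem (Subgroup.zpow_mem _ hx _) (Subgroup.zpow_mem _ hy _)
    · rw [Subgroup.closure_le]
      rintro g (rfl | rfl)
      · exact ⟨Multiplicative.ofAdd (1, 0), by rw [pairHom_apply]; show g ^ (1:ℤ) * y ^ (0:ℤ) = g; simp⟩
      · exact ⟨Multiplicative.ofAdd (0, 1), by rw [pairHom_apply]; show x ^ (0:ℤ) * g ^ (1:ℤ) = g; simp⟩
  exact ⟨(MulEquiv.subgroupCongr hr.symm).trans (MonoidHom.ofInjective hinj).symm⟩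

/-- Proposition 4.1(1): if `γ ∉ A_d` and `γ = γ₀^p a_d^q` with `p > 0` maximal, then the
centralizer of `γ` is `⟨γ₀, a_d⟩`, which is free abelian of rank 2. -/
theorem centralizer_of_non_A (d : ℕ) (hd : 1 ≤ d) (γ γ₀ : Gamma d) (p : ℕ) (q : ℤ)
    (hγ : γ ∉ A d) (hp : 0 < p)
    (hfact : γ = γ₀ ^ p * aGen d ⟨d - 1, by omega⟩ ^ q)
    (hmax : ∀ m : ℕ, 0 < m →
      (∃ h : Gamma d, ∃ k : ℤ, γ = h ^ m * aGen d ⟨d - 1, by omega⟩ ^ k) → m ≤ p) :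
    Subgroup.centralizer {γ} =
        Subgroup.closure {γ₀, aGen d ⟨d - 1, by omega⟩} ∧
      Nonempty ((Subgroup.closure {γ₀, aGen d ⟨d - 1, by omega⟩} : Subgroup (Gamma d)) ≃*
        Multiplicative (ℤ × ℤ)) := by
  have hlt : d - 1 < d := by omega
  set ad : Gamma d := aGen d ⟨d - 1, hlt⟩ with had_def
  have hcent : ∀ g : Gamma d, Commute ad g := fun g => ad_central d hd g
  have hcommγ0γ : Commute γ₀ γ := by
    rw [hfact]
    exact ((Commute.refl γ₀).pow_right p).mul_right ((hcent γ₀).symm.zpow_right q)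
  have hγ₀C : γ₀ ∈ Subgroup.centralizer {γ} :=
    Subgroup.mem_centralizer_singleton_iff.mpr hcommγ0γ.eq
  have hadC : ad ∈ Subgroup.centralizer {γ} :=
    Subgroup.mem_centralizer_singleton_iff.mpr (hcent γ).eq
  have hRad : SemidirectProduct.rightHom ad = 1 := SemidirectProduct.rightHom_inl _
  have hRγ : SemidirectProduct.rightHom γ = SemidirectProduct.rightHom γ₀ ^ p := by
    rw [hfact, map_mul, map_pow, map_zpow, hRad, one_zpow, mul_one]
  set s₀ : ℤ := Multiplicative.toAdd (SemidirectProduct.rightHom γ₀) with hs₀def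
  have hs₀ : s₀ ≠ 0 := by
    intro h0
    apply hγ
    have h1 : SemidirectProduct.rightHom γ₀ = 1 := Multiplicative.toAdd.injective h0
    have h2 : γ.right = 1 := by
      have h2' := hRγ
      rw [h1, one_pow] at h2'
      exact h2'
    have h3 : γ = SemidirectProduct.inl (φ := act d) γ.left := by
      conv_lhs => rw [← SemidirectProduct.inl_left_mul_inr_right γ]
      rw [h2, map_one, mul_one]
    rw [h3]
    exact inl_mem_A d (Multiplicative.toAdd γ.left)
  have hsr : Multiplicative.toAdd γ.right = (p : ℤ) * s₀ := by
    have h1 : γ.right = SemidirectProduct.rightHom γ := rfl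
    rw [h1, hRγ, toAdd_pow, hs₀def]
    ring
  -- kernel lemma
  have hker : ∀ g : Gamma d, g ∈ Subgroup.centralizer {γ} →
      SemidirectProduct.rightHom g = 1 → ∃ c : ℤ, g = ad ^ c := by
    intro g hg hr1
    have hcomm : g * γ = γ * g := Subgroup.mem_centralizer_singleton_iff.mp hg
    have hgr : g.right = 1 := hr1
    have hleft := congrArg SemidirectProduct.left hcomm.symm
    rw [SemidirectProduct.mul_left, SemidirectProduct.mul_left, hgr, map_one,
      MulAut.one_apply] at hleft
    have hfix : act d γ.right g.left = g.left := by
      rw [mul_comm g.left γ.left] at hleft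
      exact mul_left_cancel hleft
    rw [act_apply] at hfix
    have hfix2 := congrArg Multiplicative.toAdd hfix
    simp only [toAdd_ofAdd] at hfix2
    have hne : -(Multiplicative.toAdd γ.right) ≠ 0 := by
      rw [hsr]
      have : (p:ℤ) ≠ 0 := by exact_mod_cast hp.ne'
      intro hcon
      exact (mul_ne_zero this hs₀) (by linarith)
    have hsz := fixed_of_zpow d _ hne _ hfix2
    have hsingle := eq_single_of_shift_eq_zero d hd _ hsz
    refine ⟨Multiplicative.toAdd g.left ⟨d-1, hlt⟩, ?_⟩
    have h5 : g = SemidirectProduct.inl (φ := act d) g.left := by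
      conv_lhs => rw [← SemidirectProduct.inl_left_mul_inr_right g]
      rw [hgr, map_one, mul_one]
    conv_lhs => rw [h5]
    rw [had_def]
    unfold aGen
    rw [← map_zpow, ← ofAdd_zsmul]
    exact congrArg SemidirectProduct.inl (congrArg Multiplicative.ofAdd hsingle)
  -- the image subgroup in ℤ
  let U : AddSubgroup ℤ :=
    { carrier := {u | ∃ g ∈ Subgroup.centralizer {γ},
        Multiplicative.toAdd (SemidirectProduct.rightHom g) = u}
      zero_mem' := ⟨1, one_mem _, by simp⟩
      add_mem' := by
        rintro a b ⟨g, hg, hga⟩ ⟨g', hg', hgb⟩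
        exact ⟨g * g', mul_mem hg hg', by rw [map_mul, toAdd_mul, hga, hgb]⟩
      neg_mem' := by
        rintro a ⟨g, hg, hga⟩
        exact ⟨g⁻¹, inv_mem hg, by rw [map_inv, toAdd_inv, hga]⟩ }
  obtain ⟨r, hU⟩ := Int.subgroup_cyclic U
  have hs₀U : s₀ ∈ U := ⟨γ₀, hγ₀C, rfl⟩
  have hrU : r ∈ U := by
    rw [hU]
    exact AddSubgroup.subset_closure rfl
  obtain ⟨h, hhC, hhr⟩ := hrU
  obtain ⟨m, hm⟩ : ∃ m : ℤ, m • r = s₀ := by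
    rw [hU] at hs₀U
    exact AddSubgroup.mem_closure_singleton.mp hs₀U
  have hmne : m ≠ 0 := fun h0 => hs₀ (by rw [← hm, h0, zero_smul])
  have hmemC : h ^ m * γ₀⁻¹ ∈ Subgroup.centralizer {γ} :=
    mul_mem (Subgroup.zpow_mem _ hhC m) (inv_mem hγ₀C)
  have hR1 : SemidirectProduct.rightHom (h ^ m * γ₀⁻¹) = 1 := by
    apply Multiplicative.toAdd.injective
    rw [map_mul, map_zpow, map_inv, toAdd_mul, toAdd_inv, toAdd_zpow, hhr]
    rw [hm]
    show s₀ + -s₀ = Multiplicative.toAdd (1 : Multiplicative ℤ)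
    rw [toAdd_one]
    ring
  obtain ⟨c, hc⟩ := hker _ hmemC hR1
  have hγ₀eq : γ₀ = ad ^ (-c) * h ^ m := by
    have h6 : h ^ m = ad ^ c * γ₀ := by rw [← hc]; group
    rw [h6]
    group
  have hsplit : γ = h ^ (m * (p:ℤ)) * ad ^ (q - c * p) := by
    rw [hfact, hγ₀eq]
    have h1 : (ad ^ (-c) * h ^ m) ^ p = (ad ^ (-c)) ^ p * (h ^ m) ^ p :=
      ((hcent (h ^ m)).zpow_left (-c)).mul_pow p
    have h2 : (ad ^ (-c)) ^ p = ad ^ ((-c) * (p:ℤ)) := by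
      rw [zpow_mul, zpow_natCast]
    have h3 : (h ^ m) ^ p = h ^ (m * (p:ℤ)) := by
      rw [zpow_mul, zpow_natCast]
    rw [h1, h2, h3]
    have h4 : ad ^ ((-c) * (p:ℤ)) * h ^ (m * (p:ℤ)) = h ^ (m * (p:ℤ)) * ad ^ ((-c) * (p:ℤ)) :=
      ((hcent (h ^ (m * (p:ℤ)))).zpow_left ((-c) * (p:ℤ))).eq
    rw [h4, mul_assoc, ← zpow_add]
    congr 1
    show aGen d ⟨d-1, hlt⟩ ^ _ = aGen d ⟨d-1, hlt⟩ ^ _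
    congr 1
    ring
  have hmabs : m = 1 ∨ m = -1 := by
    rcases lt_or_gt_of_ne hmne with hneg | hpos
    · right
      have hn : 0 < (-m).toNat * p := Nat.mul_pos (by omega) hp
      have hsplit' : γ = h⁻¹ ^ ((-m).toNat * p) * ad ^ (q - c * p) := by
        rw [hsplit]
        congr 1
        have hcast : (((-m).toNat * p : ℕ) : ℤ) = -(m * (p:ℤ)) := by
          push_cast [Int.toNat_of_nonneg (show (0:ℤ) ≤ -m by omega)]
          ring
        rw [← zpow_natCast h⁻¹ ((-m).toNat * p), hcast, inv_zpow, ← zpow_neg, neg_neg]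
      have hle := hmax ((-m).toNat * p) hn ⟨h⁻¹, q - c * p, hsplit'⟩
      have h7 : (-m).toNat ≤ 1 := by
        have h9 : (-m).toNat * p ≤ 1 * p := by rw [one_mul]; exact hle
        exact Nat.le_of_mul_le_mul_right h9 hp
      omega
    · left
      have hn : 0 < m.toNat * p := Nat.mul_pos (by omega) hp
      have hsplit' : γ = h ^ (m.toNat * p) * ad ^ (q - c * p) := by
        rw [hsplit]
        congr 1
        have hcast : ((m.toNat * p : ℕ) : ℤ) = m * (p:ℤ) := by
          push_cast [Int.toNat_of_nonneg (show (0:ℤ) ≤ m by omega)]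
          ring
        rw [← zpow_natCast h (m.toNat * p), hcast]
      have hle := hmax (m.toNat * p) hn ⟨h, q - c * p, hsplit'⟩
      have h7 : m.toNat ≤ 1 := by
        have h9 : m.toNat * p ≤ 1 * p := by rw [one_mul]; exact hle
        exact Nat.le_of_mul_le_mul_right h9 hp
      omega
  have hrdvd : ∀ g : Gamma d, g ∈ Subgroup.centralizer {γ} →
      s₀ ∣ Multiplicative.toAdd (SemidirectProduct.rightHom g) := by
    intro g hg
    have hu : Multiplicative.toAdd (SemidirectProduct.rightHom g) ∈ U := ⟨g, hg, rfl⟩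
    rw [hU] at hu
    obtain ⟨k, hk⟩ := AddSubgroup.mem_closure_singleton.mp hu
    rcases hmabs with h1 | h1
    · rw [h1, one_smul] at hm
      exact ⟨k, by rw [← hk, smul_eq_mul, hm]; ring⟩
    · rw [h1] at hm
      have hs : s₀ = -r := by rw [← hm, smul_eq_mul]; ring
      exact ⟨-k, by rw [← hk, smul_eq_mul, hs]; ring⟩
  have hγ₀cl : γ₀ ∈ Subgroup.closure ({γ₀, ad} : Set (Gamma d)) :=
    Subgroup.subset_closure (Set.mem_insert _ _)
  have hadcl : ad ∈ Subgroup.closure ({γ₀, ad} : Set (Gamma d)) :=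
    Subgroup.subset_closure (Set.mem_insert_of_mem _ rfl)
  constructor
  · apply le_antisymm
    · intro g hg
      obtain ⟨n, hn⟩ := hrdvd g hg
      have hmem2 : g * γ₀ ^ (-n) ∈ Subgroup.centralizer {γ} :=
        mul_mem hg (Subgroup.zpow_mem _ hγ₀C (-n))
      have hR2 : SemidirectProduct.rightHom (g * γ₀ ^ (-n)) = 1 := by
        apply Multiplicative.toAdd.injective
        rw [map_mul, map_zpow, toAdd_mul, toAdd_zpow, hn]
        show s₀ * n + (-n) • s₀ = Multiplicative.toAdd (1 : Multiplicative ℤ)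
        rw [toAdd_one, smul_eq_mul]
        ring
      obtain ⟨c', hc'⟩ := hker _ hmem2 hR2
      have hgeq : g = ad ^ c' * γ₀ ^ n := by
        rw [← hc']
        group
      rw [hgeq]
      exact mul_mem (Subgroup.zpow_mem _ hadcl c') (Subgroup.zpow_mem _ hγ₀cl n)
    · rw [Subgroup.closure_le]
      rintro g (rfl | rfl)
      · exact hγ₀C
      · exact hadC
  · apply free_rank_two γ₀ ad (hcent γ₀).symm
    intro n c h1
    have hRn := congrArg SemidirectProduct.rightHom h1
    rw [map_mul, map_zpow, map_zpow, hRad, one_zpow, mul_one, map_one] at hRn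
    have hn0 : n = 0 := by
      have h2 := congrArg Multiplicative.toAdd hRn
      rw [toAdd_zpow, toAdd_one, smul_eq_mul, ← hs₀def] at h2
      rcases mul_eq_zero.mp h2 with h3 | h3
      · exact h3
      · exact absurd h3 hs₀
    refine ⟨hn0, ?_⟩
    rw [hn0, zpow_zero, one_mul] at h1
    have h4 : SemidirectProduct.inl (φ := act d)
        (Multiplicative.ofAdd (c • Pi.single (⟨d-1, hlt⟩ : Fin d) (1:ℤ))) =
        SemidirectProduct.inl (φ := act d) (Multiplicative.ofAdd (0 : Fin d → ℤ)) := by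
      rw [ofAdd_zsmul, map_zpow]
      show ad ^ c = _
      rw [h1]
      simp
    have h5 := congrArg Multiplicative.toAdd (SemidirectProduct.inl_injective h4)
    simp only [toAdd_ofAdd] at h5
    have h6 := congrFun h5 ⟨d-1, hlt⟩
    simp at h6
    exact h6

end ModelFiliform
end
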